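/- arXiv:math-ph/0505064 — 4 statements merged into one kernel-verified Lean document; each statement's English description precedes it below -/
import Mathlib

section
/- The coproduct Δ of the m-bonsai algebra H_{b,m} is coassociative: (Δ ⊗ id) ∘ Δ = (id ⊗ Δ) ∘ Δ on H_{b,m}. -/
/-! Core definitions for (edge-labeled) `m`-bonsais, following Byun,
"A Generalization of Connes-Kreimer Hopf Algebra".

An `m`-bonsai is a finite rooted tree in which every vertex has at most `m`
children and the edges from a vertex to its children carry pairwise distinct
labels from `{1, …, m}` (here modeled by `Fin m`).  We encode such a tree by
its (finite, prefix-closed) set of vertex-addresses: the address of a vertex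
is the list of edge labels on the path from the root to it.  This encoding
builds in both the arity bound and the distinctness of sibling labels. -/

open scoped Classical TensorProduct

structure Bonsai (m : ℕ) where
  verts : Finset (List (Fin m))
  root_mem : ([] : List (Fin m)) ∈ verts
  prefix_closed : ∀ ⦃p q : List (Fin m)⦄, p ∈ verts → q <+: p → q ∈ verts

namespace Bonsai

variable {m : ℕ}

theorem ext' {T U : Bonsai m} (h : T.verts = U.verts) : T = U := by
  cases T; cases U; simp_all

/-- The one-vertex bonsai. -/
def point (m : ℕ) : Bonsai m where
  verts := {[]}
  root_mem := by simp
  prefix_closed := by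
    intro p q hp hq
    simp only [Finset.mem_singleton] at hp ⊢
    subst hp
    exact List.prefix_nil.mp hq

/-- `deg T` is the number of vertices of `T`. -/
def deg (T : Bonsai m) : ℕ := T.verts.card

/-- The subtree of `T` rooted at the vertex (address) `e`. -/
noncomputable def subtreeAt (T : Bonsai m) (e : List (Fin m)) : Bonsai m where
  verts := insert [] ((T.verts.filter (fun p => e <+: p)).image (fun p => p.drop e.length))
  root_mem := by simp
  prefix_closed := by
    intro p q hp hq
    simp only [Finset.mem_insert, Finset.mem_image, Finset.mem_filter] at hp ⊢
    rcases hp with rfl | ⟨r, ⟨hr, her⟩, rfl⟩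
    · left; exact List.prefix_nil.mp hq
    · right
      refine ⟨e ++ q, ⟨T.prefix_closed hr ?_, List.prefix_append e q⟩, by simp⟩
      have : e ++ q <+: e ++ r.drop e.length := (List.prefix_append_right_inj e).mpr hq
      rwa [List.prefix_iff_eq_append.mp her] at this

/-- The set of simple cuts of `T` (including the empty cut).  A simple cut is a
set of edges (an edge is recorded by the address of its child endpoint, hence a
nonempty vertex address) no two of which lie on a common path to the root. -/
noncomputable def cutsSet (T : Bonsai m) : Finset (Finset (List (Fin m))) :=
  (T.verts.erase []).powerset.filter
    (fun c => ∀ e ∈ c, ∀ e' ∈ c, e <+: e' → e = e')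

/-- `R_c(T)`: the trunk (the part containing the root) left after the simple cut `c`. -/
noncomputable def trunk (T : Bonsai m) (c : Finset (List (Fin m))) : Bonsai m where
  verts := insert [] (T.verts.filter (fun p => ∀ e ∈ c, ¬ e <+: p))
  root_mem := by simp
  prefix_closed := by
    intro p q hp hq
    simp only [Finset.mem_insert, Finset.mem_filter] at hp ⊢
    rcases hp with rfl | ⟨hp, hc⟩
    · left; exact List.prefix_nil.mp hq
    · right
      exact ⟨T.prefix_closed hp hq, fun e he hel => hc e he (hel.trans hq)⟩

/-- `P_c(T)`: the forest (multiset) of branches cut off by the simple cut `c`. -/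
noncomputable def branches (T : Bonsai m) (c : Finset (List (Fin m))) :
    Multiset (Bonsai m) := c.val.map T.subtreeAt

end Bonsai

namespace Bonsai

variable {m : ℕ}


lemma mem_cutsSet {T : Bonsai m} {c : Finset (List (Fin m))} :
    c ∈ T.cutsSet ↔ (∀ e ∈ c, e ∈ T.verts ∧ e ≠ []) ∧
      ∀ e ∈ c, ∀ e' ∈ c, e <+: e' → e = e' := by
  simp only [cutsSet, Finset.mem_filter, Finset.mem_powerset, Finset.subset_iff,
    Finset.mem_erase]
  exact ⟨fun ⟨h1, h2⟩ => ⟨fun e he => ⟨(h1 he).2, (h1 he).1⟩, h2⟩,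
    fun ⟨h1, h2⟩ => ⟨fun e he => ⟨(h1 e he).2, (h1 e he).1⟩, h2⟩⟩

lemma empty_mem_cutsSet (T : Bonsai m) : (∅ : Finset (List (Fin m))) ∈ T.cutsSet := by
  simp [mem_cutsSet]

lemma cutsSet_subset {T : Bonsai m} {c d : Finset (List (Fin m))}
    (hc : c ∈ T.cutsSet) (hdc : d ⊆ c) : d ∈ T.cutsSet := by
  rw [mem_cutsSet] at hc ⊢
  exact ⟨fun e he => hc.1 e (hdc he), fun e he e' he' h => hc.2 e (hdc he) e' (hdc he') h⟩

lemma mem_trunk_verts {T : Bonsai m} {c : Finset (List (Fin m))} {p : List (Fin m)} :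
    p ∈ (T.trunk c).verts ↔ p = [] ∨ (p ∈ T.verts ∧ ∀ e ∈ c, ¬ e <+: p) := by
  simp [trunk]

lemma mem_subtreeAt_verts {T : Bonsai m} {e q : List (Fin m)} :
    q ∈ (T.subtreeAt e).verts ↔ q = [] ∨ e ++ q ∈ T.verts := by
  simp only [subtreeAt, Finset.mem_insert, Finset.mem_image, Finset.mem_filter]
  constructor
  · rintro (rfl | ⟨p, ⟨hp, hpre⟩, rfl⟩)
    · exact Or.inl rfl
    · right; rwa [List.prefix_iff_eq_append.mp hpre]
  · rintro (rfl | h)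
    · exact Or.inl rfl
    · right; exact ⟨e ++ q, ⟨h, List.prefix_append e q⟩, by simp⟩

lemma subtreeAt_append (T : Bonsai m) (e f : List (Fin m)) :
    T.subtreeAt (e ++ f) = (T.subtreeAt e).subtreeAt f := by
  apply ext'
  ext q
  simp only [mem_subtreeAt_verts, List.append_assoc, List.append_eq_nil_iff]
  tauto

/-- two prefixes of the same list are comparable -/
lemma incomp {a b p : List (Fin m)} (hab : ¬ a <+: b) (hba : ¬ b <+: a)
    (ha : a <+: p) (hb : b <+: p) : False :=
  (List.prefix_or_prefix_of_prefix ha hb).elim hab hba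

end Bonsai

namespace Bonsai

variable {m : ℕ}

/-- Cuts of `T` refining the antichain `C`: every edge lies below some edge of `C`. -/
noncomputable def ref (T : Bonsai m) (C : Finset (List (Fin m))) :
    Finset (Finset (List (Fin m))) :=
  T.cutsSet.filter (fun c => ∀ e ∈ c, ∃ E ∈ C, E <+: e)

lemma mem_ref {T : Bonsai m} {C c : Finset (List (Fin m))} :
    c ∈ ref T C ↔ c ∈ T.cutsSet ∧ ∀ e ∈ c, ∃ E ∈ C, E <+: e :=
  Finset.mem_filter

lemma ref_empty (T : Bonsai m) : ref T ∅ = {∅} := by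
  ext c
  simp only [mem_ref, Finset.mem_singleton]
  constructor
  · rintro ⟨-, h⟩
    exact Finset.eq_empty_of_forall_notMem fun e he => by
      rcases h e he with ⟨E, hE, -⟩; exact absurd hE (Finset.notMem_empty E)
  · rintro rfl; exact ⟨empty_mem_cutsSet T, by simp⟩

section InsertStep

variable {T : Bonsai m} {C c : Finset (List (Fin m))} {E : List (Fin m)}

lemma antichain_of_cutsSet {d : Finset (List (Fin m))} (hd : d ∈ T.cutsSet) :
    ∀ e ∈ d, ∀ e' ∈ d, e <+: e' → e = e' := (mem_cutsSet.mp hd).2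

/-- `E` is incomparable with every element of `C`. -/
lemma insert_incomp (hins : insert E C ∈ T.cutsSet) (hE : E ∉ C)
    {E' : List (Fin m)} (hE' : E' ∈ C) : ¬ E <+: E' ∧ ¬ E' <+: E := by
  have ha := antichain_of_cutsSet hins
  constructor
  · intro h
    have := ha E (Finset.mem_insert_self E C) E' (Finset.mem_insert_of_mem hE') h
    exact hE (this ▸ hE')
  · intro h
    have := ha E' (Finset.mem_insert_of_mem hE') E (Finset.mem_insert_self E C) h
    subst this; exact hE hE'

/-- For a refinement `c` of `C`, every element of `c` is incomparable with `E`. -/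
lemma ref_incomp (hins : insert E C ∈ T.cutsSet) (hE : E ∉ C)
    (hc : c ∈ ref T C) {e : List (Fin m)} (he : e ∈ c) : ¬ E <+: e ∧ ¬ e <+: E := by
  obtain ⟨E₀, hE₀, hpre⟩ := (mem_ref.mp hc).2 e he
  have hinc := insert_incomp hins hE hE₀
  constructor
  · intro h
    rcases List.prefix_or_prefix_of_prefix h hpre with h' | h'
    · exact hinc.1 h'
    · exact hinc.2 h'
  · intro h
    exact hinc.2 (hpre.trans h)

lemma ref_not_mem (hins : insert E C ∈ T.cutsSet) (hE : E ∉ C)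
    (hc : c ∈ ref T C) : E ∉ c := fun h =>
  (ref_incomp hins hE hc h).1 List.prefix_rfl

lemma ref_far (hins : insert E C ∈ T.cutsSet) (hE : E ∉ C)
    (hc : c ∈ ref T C) {e p : List (Fin m)} (he : e ∈ c) (hp : E <+: p) :
    ¬ e <+: p := fun h =>
  incomp (ref_incomp hins hE hc he).2 (ref_incomp hins hE hc he).1 h hp

/-- Elements of `C` are "far" from `E` as well. -/
lemma mem_C_far (hins : insert E C ∈ T.cutsSet) (hE : E ∉ C)
    {E' p : List (Fin m)} (hE' : E' ∈ C) (hp : E' <+: p) : ¬ E <+: p := fun h =>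
  incomp (insert_incomp hins hE hE').1 (insert_incomp hins hE hE').2 h hp

end InsertStep

section TrunkLemmas

variable {T : Bonsai m} {C c : Finset (List (Fin m))}

lemma subtree_trunk_congr (T : Bonsai m) {c₁ c₂ : Finset (List (Fin m))}
    {E : List (Fin m)}
    (h : ∀ p, E <+: p → ((∀ e ∈ c₁, ¬ e <+: p) ↔ (∀ e ∈ c₂, ¬ e <+: p))) :
    (T.trunk c₁).subtreeAt E = (T.trunk c₂).subtreeAt E := by
  apply ext'
  ext q
  simp only [mem_subtreeAt_verts, mem_trunk_verts]
  refine or_congr Iff.rfl (or_congr Iff.rfl (and_congr Iff.rfl ?_))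
  exact h (E ++ q) (List.prefix_append E q)

lemma trunk_trunk (hcov : ∀ e ∈ c, ∃ E ∈ C, E <+: e) :
    (T.trunk c).trunk (C \ c) = T.trunk C := by
  apply ext'
  ext p
  simp only [mem_trunk_verts]
  constructor
  · rintro (rfl | ⟨rfl | ⟨hp, hc⟩, hCc⟩)
    · exact Or.inl rfl
    · exact Or.inl rfl
    · refine Or.inr ⟨hp, fun E hE hpre => ?_⟩
      by_cases hEc : E ∈ c
      · exact hc E hEc hpre
      · exact hCc E (Finset.mem_sdiff.mpr ⟨hE, hEc⟩) hpre
  · rintro (rfl | ⟨hp, hC⟩)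
    · exact Or.inl rfl
    · refine Or.inr ⟨Or.inr ⟨hp, fun e he hpre => ?_⟩, fun E hE hpre =>
        hC E (Finset.mem_sdiff.mp hE).1 hpre⟩
      obtain ⟨E, hE, hpre'⟩ := hcov e he
      exact hC E hE (hpre'.trans hpre)

lemma sdiff_mem_cutsSet_trunk (hC : C ∈ T.cutsSet) (hc : c ∈ ref T C) :
    C \ c ∈ (T.trunk c).cutsSet := by
  rw [mem_cutsSet]
  have hCm := mem_cutsSet.mp hC
  refine ⟨fun e he => ?_, fun e he e' he' h =>
    hCm.2 e (Finset.mem_sdiff.mp he).1 e' (Finset.mem_sdiff.mp he').1 h⟩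
  obtain ⟨heC, hec⟩ := Finset.mem_sdiff.mp he
  refine ⟨mem_trunk_verts.mpr (Or.inr ⟨(hCm.1 e heC).1, fun f hf hpre => ?_⟩),
    (hCm.1 e heC).2⟩
  obtain ⟨E₀, hE₀, hpre'⟩ := (mem_ref.mp hc).2 f hf
  have : E₀ = e := hCm.2 E₀ hE₀ e heC (hpre'.trans hpre)
  subst this
  exact hec (hpre.eq_of_length (hpre.length_le.antisymm hpre'.length_le) ▸ hf)

end TrunkLemmas

end Bonsai

namespace Bonsai

variable {m : ℕ}

/-- Combine a cut `c` of `T` and a cut `c'` of the trunk into a coarser cut of `T`. -/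
noncomputable def cof (c c' : Finset (List (Fin m))) : Finset (List (Fin m)) :=
  c' ∪ c.filter (fun e => ∀ e' ∈ c', ¬ e' <+: e)

section Cof

variable {T : Bonsai m} {C c c' : Finset (List (Fin m))}

lemma trunk_cut_disj (hc' : c' ∈ (T.trunk c).cutsSet) : ∀ x ∈ c', x ∉ c := by
  intro x hx hxc
  have h := (mem_cutsSet.mp hc').1 x hx
  rcases mem_trunk_verts.mp h.1 with rfl | ⟨-, h2⟩
  · exact h.2 rfl
  · exact h2 x hxc List.prefix_rfl

lemma trunk_cut_not_below (hc' : c' ∈ (T.trunk c).cutsSet) :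
    ∀ x ∈ c', ∀ e ∈ c, ¬ e <+: x := by
  intro x hx e he hpre
  have h := (mem_cutsSet.mp hc').1 x hx
  rcases mem_trunk_verts.mp h.1 with rfl | ⟨-, h2⟩
  · exact h.2 rfl
  · exact h2 e he hpre

lemma cof_mem_cutsSet (hc : c ∈ T.cutsSet) (hc' : c' ∈ (T.trunk c).cutsSet) :
    cof c c' ∈ T.cutsSet := by
  rw [mem_cutsSet]
  have hcm := mem_cutsSet.mp hc
  have hc'm := mem_cutsSet.mp hc'
  constructor
  · intro e he
    rcases Finset.mem_union.mp he with h | h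
    · have h1 := hc'm.1 e h
      rcases mem_trunk_verts.mp h1.1 with rfl | ⟨hv, -⟩
      · exact absurd rfl h1.2
      · exact ⟨hv, h1.2⟩
    · exact hcm.1 e (Finset.mem_filter.mp h).1
  · intro a ha b hb hab
    rcases Finset.mem_union.mp ha with ha' | ha' <;>
      rcases Finset.mem_union.mp hb with hb' | hb'
    · exact hc'm.2 a ha' b hb' hab
    · obtain ⟨hbmem, hbfil⟩ := Finset.mem_filter.mp hb'
      exact absurd hab (hbfil a ha')
    · obtain ⟨hamem, hafil⟩ := Finset.mem_filter.mp ha'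
      exact absurd hab (trunk_cut_not_below hc' b hb' a hamem)
    · exact hcm.2 a (Finset.mem_filter.mp ha').1 b (Finset.mem_filter.mp hb').1 hab

lemma mem_ref_cof (hc : c ∈ T.cutsSet) : c ∈ ref T (cof c c') := by
  rw [mem_ref]
  refine ⟨hc, fun e he => ?_⟩
  by_cases h : ∀ e' ∈ c', ¬ e' <+: e
  · exact ⟨e, Finset.mem_union_right _ (Finset.mem_filter.mpr ⟨he, h⟩), List.prefix_rfl⟩
  · push_neg at h
    obtain ⟨e', he', hpre⟩ := h
    exact ⟨e', Finset.mem_union_left _ he', hpre⟩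

lemma cof_sdiff (hc' : c' ∈ (T.trunk c).cutsSet) : cof c c' \ c = c' := by
  ext x
  simp only [cof, Finset.mem_sdiff, Finset.mem_union, Finset.mem_filter]
  constructor
  · rintro ⟨h1 | h1, h2⟩
    · exact h1
    · exact absurd h1.1 h2
  · intro hx
    exact ⟨Or.inl hx, trunk_cut_disj hc' x hx⟩

lemma cof_sdiff_self (hC : C ∈ T.cutsSet) (hc : c ∈ ref T C) : cof c (C \ c) = C := by
  have hCm := mem_cutsSet.mp hC
  have hcm := mem_cutsSet.mp (mem_ref.mp hc).1
  ext x
  simp only [cof, Finset.mem_union, Finset.mem_sdiff, Finset.mem_filter]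
  constructor
  · rintro (⟨h1, -⟩ | ⟨h1, h2⟩)
    · exact h1
    · -- x ∈ c, no prefix of x lies in C \ c; show x ∈ C
      obtain ⟨E, hE, hpre⟩ := (mem_ref.mp hc).2 x h1
      by_cases hEc : E ∈ c
      · exact (hcm.2 E hEc x h1 hpre) ▸ hE
      · exact absurd hpre (h2 E ⟨hE, hEc⟩)
  · intro hx
    by_cases hxc : x ∈ c
    · refine Or.inr ⟨hxc, fun E hE hpre => ?_⟩
      obtain ⟨hEC, hEc⟩ := hE
      exact hEc ((hCm.2 E hEC x hx hpre) ▸ hxc)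
    · exact Or.inl ⟨hx, hxc⟩

end Cof

end Bonsai

namespace Bonsai

variable {m : ℕ}

section InsertStep2

variable {T : Bonsai m} {C c d c' : Finset (List (Fin m))} {E : List (Fin m)}

lemma subtree_cut_facts (hd : d ∈ (T.subtreeAt E).cutsSet) :
    ∀ f ∈ d, f ≠ [] ∧ E ++ f ∈ T.verts := by
  intro f hf
  have h := (mem_cutsSet.mp hd).1 f hf
  refine ⟨h.2, ?_⟩
  rcases mem_subtreeAt_verts.mp h.1 with rfl | hv
  · exact absurd rfl h.2
  · exact hv

lemma E_not_mem_image (hd : d ∈ (T.subtreeAt E).cutsSet) :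
    E ∉ d.image (E ++ ·) := by
  intro h
  obtain ⟨f, hf, hEf⟩ := Finset.mem_image.mp h
  have : f = [] := by
    have := congrArg List.length hEf
    simpa using this
  exact (subtree_cut_facts hd f hf).1 this

lemma ref_insert_mem (hins : insert E C ∈ T.cutsSet) (hE : E ∉ C)
    (hc : c ∈ ref T C) : insert E c ∈ ref T (insert E C) := by
  have hEv := (mem_cutsSet.mp hins).1 E (Finset.mem_insert_self E C)
  rw [mem_ref, mem_cutsSet]
  refine ⟨⟨fun e he => ?_, fun a ha b hb hab => ?_⟩, fun e he => ?_⟩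
  · rcases Finset.mem_insert.mp he with rfl | he'
    · exact hEv
    · exact (mem_cutsSet.mp (mem_ref.mp hc).1).1 e he'
  · rcases Finset.mem_insert.mp ha with rfl | ha' <;>
      rcases Finset.mem_insert.mp hb with rfl | hb'
    · rfl
    · exact absurd hab (ref_incomp hins hE hc hb').1
    · exact absurd hab (ref_incomp hins hE hc ha').2
    · exact antichain_of_cutsSet (mem_ref.mp hc).1 a ha' b hb' hab
  · rcases Finset.mem_insert.mp he with rfl | he'
    · exact ⟨_, Finset.mem_insert_self _ _, List.prefix_rfl⟩
    · obtain ⟨E₀, hE₀, hpre⟩ := (mem_ref.mp hc).2 e he'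
      exact ⟨E₀, Finset.mem_insert_of_mem hE₀, hpre⟩

lemma erase_mem_ref (hc' : c' ∈ ref T (insert E C)) (hEc' : E ∈ c') :
    c'.erase E ∈ ref T C := by
  rw [mem_ref]
  refine ⟨cutsSet_subset (mem_ref.mp hc').1 (Finset.erase_subset _ _), fun e he => ?_⟩
  obtain ⟨heE, hec'⟩ := Finset.mem_erase.mp he
  obtain ⟨E₀, hE₀, hpre⟩ := (mem_ref.mp hc').2 e hec'
  rcases Finset.mem_insert.mp hE₀ with rfl | hE₀'
  · exact absurd (antichain_of_cutsSet (mem_ref.mp hc').1 E₀ hEc' e hec' hpre).symm heE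
  · exact ⟨E₀, hE₀', hpre⟩

lemma sdiff_insert_insert (hE : E ∉ C) (hEc : E ∉ c) :
    (insert E C) \ (insert E c) = C \ c := by
  ext x
  simp only [Finset.mem_sdiff, Finset.mem_insert, not_or]
  constructor
  · rintro ⟨rfl | hx, hxE, hxc⟩
    · exact absurd rfl hxE
    · exact ⟨hx, hxc⟩
  · rintro ⟨hx, hxc⟩
    exact ⟨Or.inr hx, fun h => hE (h ▸ hx), hxc⟩

lemma cup_mem_ref (hins : insert E C ∈ T.cutsSet) (hE : E ∉ C)
    (hc : c ∈ ref T C) (hd : d ∈ (T.subtreeAt E).cutsSet) :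
    c ∪ d.image (E ++ ·) ∈ ref T (insert E C) := by
  have hEv := (mem_cutsSet.mp hins).1 E (Finset.mem_insert_self E C)
  rw [mem_ref, mem_cutsSet]
  refine ⟨⟨fun e he => ?_, fun a ha b hb hab => ?_⟩, fun e he => ?_⟩
  · rcases Finset.mem_union.mp he with he' | he'
    · exact (mem_cutsSet.mp (mem_ref.mp hc).1).1 e he'
    · obtain ⟨f, hf, rfl⟩ := Finset.mem_image.mp he'
      refine ⟨(subtree_cut_facts hd f hf).2, fun h => ?_⟩
      rcases List.append_eq_nil_iff.mp h with ⟨h1, -⟩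
      exact hEv.2 h1
  · rcases Finset.mem_union.mp ha with ha' | ha' <;>
      rcases Finset.mem_union.mp hb with hb' | hb'
    · exact antichain_of_cutsSet (mem_ref.mp hc).1 a ha' b hb' hab
    · obtain ⟨f, hf, rfl⟩ := Finset.mem_image.mp hb'
      exact absurd hab (ref_far hins hE hc ha' (List.prefix_append E f))
    · obtain ⟨f, hf, rfl⟩ := Finset.mem_image.mp ha'
      exact absurd hab fun h =>
        (ref_incomp hins hE hc hb').1 ((List.prefix_append E f).trans h)
    · obtain ⟨f, hf, rfl⟩ := Finset.mem_image.mp ha'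
      obtain ⟨g, hg, rfl⟩ := Finset.mem_image.mp hb'
      have : f <+: g := (List.prefix_append_right_inj E).mp hab
      rw [antichain_of_cutsSet hd f hf g hg this]
  · rcases Finset.mem_union.mp he with he' | he'
    · obtain ⟨E₀, hE₀, hpre⟩ := (mem_ref.mp hc).2 e he'
      exact ⟨E₀, Finset.mem_insert_of_mem hE₀, hpre⟩
    · obtain ⟨f, hf, rfl⟩ := Finset.mem_image.mp he'
      exact ⟨E, Finset.mem_insert_self E C, List.prefix_append E f⟩

lemma E_not_mem_cup (hins : insert E C ∈ T.cutsSet) (hE : E ∉ C)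
    (hc : c ∈ ref T C) (hd : d ∈ (T.subtreeAt E).cutsSet) :
    E ∉ c ∪ d.image (E ++ ·) := by
  intro h
  rcases Finset.mem_union.mp h with h' | h'
  · exact ref_not_mem hins hE hc h'
  · exact E_not_mem_image hd h'

lemma sdiff_cup (hins : insert E C ∈ T.cutsSet) (hE : E ∉ C)
    (hc : c ∈ ref T C) (hd : d ∈ (T.subtreeAt E).cutsSet) :
    (insert E C) \ (c ∪ d.image (E ++ ·)) = insert E (C \ c) := by
  ext x
  simp only [Finset.mem_sdiff, Finset.mem_insert, Finset.mem_union, not_or]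
  constructor
  · rintro ⟨rfl | hx, hxc, hxi⟩
    · exact Or.inl rfl
    · exact Or.inr ⟨hx, hxc⟩
  · rintro (rfl | ⟨hx, hxc⟩)
    · exact ⟨Or.inl rfl, ref_not_mem hins hE hc, E_not_mem_image hd⟩
    · refine ⟨Or.inr hx, hxc, fun h => ?_⟩
      obtain ⟨f, hf, rfl⟩ := Finset.mem_image.mp h
      exact (insert_incomp hins hE hx).1 (List.prefix_append E f)

lemma filter_cup_below (hins : insert E C ∈ T.cutsSet) (hE : E ∉ C)
    (hc : c ∈ ref T C) (hd : d ∈ (T.subtreeAt E).cutsSet) :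
    (c ∪ d.image (E ++ ·)).filter (fun e => E <+: e) = d.image (E ++ ·) := by
  ext x
  simp only [Finset.mem_filter, Finset.mem_union]
  constructor
  · rintro ⟨hx | hx, hpre⟩
    · exact absurd hpre (ref_incomp hins hE hc hx).1
    · exact hx
  · intro hx
    obtain ⟨f, hf, rfl⟩ := Finset.mem_image.mp hx
    exact ⟨Or.inr hx, List.prefix_append E f⟩

lemma filter_cup_not_below (hins : insert E C ∈ T.cutsSet) (hE : E ∉ C)
    (hc : c ∈ ref T C) (hd : d ∈ (T.subtreeAt E).cutsSet) :
    (c ∪ d.image (E ++ ·)).filter (fun e => ¬ E <+: e) = c := by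
  ext x
  simp only [Finset.mem_filter, Finset.mem_union]
  constructor
  · rintro ⟨hx | hx, hpre⟩
    · exact hx
    · obtain ⟨f, hf, rfl⟩ := Finset.mem_image.mp hx
      exact absurd (List.prefix_append E f) hpre
  · intro hx
    exact ⟨Or.inl hx, (ref_incomp hins hE hc hx).1⟩

lemma image_drop_image (d : Finset (List (Fin m))) (E : List (Fin m)) :
    (d.image (E ++ ·)).image (fun e => e.drop E.length) = d := by
  rw [Finset.image_image]
  have : ((fun e => List.drop E.length e) ∘ (E ++ ·)) = id := by
    funext f; simp [List.drop_left]
  rw [this, Finset.image_id]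

/-- the backward map: the part of `c'` below `E`, moved into the subtree at `E`. -/
lemma dOf_mem_cutsSet (hc' : c' ∈ ref T (insert E C)) (hEc' : E ∉ c') :
    (c'.filter (fun e => E <+: e)).image (fun e => e.drop E.length)
      ∈ (T.subtreeAt E).cutsSet := by
  rw [mem_cutsSet]
  constructor
  · intro f hf
    obtain ⟨e, he, rfl⟩ := Finset.mem_image.mp hf
    obtain ⟨hec', hpre⟩ := Finset.mem_filter.mp he
    have heq : E ++ e.drop E.length = e := List.prefix_iff_eq_append.mp hpre
    constructor
    · rw [mem_subtreeAt_verts, heq]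
      exact Or.inr ((mem_cutsSet.mp (mem_ref.mp hc').1).1 e hec').1
    · intro h
      rw [h, List.append_nil] at heq
      exact hEc' (heq ▸ hec')
  · intro f hf g hg hfg
    obtain ⟨e, he, rfl⟩ := Finset.mem_image.mp hf
    obtain ⟨e', he', rfl⟩ := Finset.mem_image.mp hg
    obtain ⟨hec', hpre⟩ := Finset.mem_filter.mp he
    obtain ⟨hec'', hpre'⟩ := Finset.mem_filter.mp he'
    have heq : E ++ e.drop E.length = e := List.prefix_iff_eq_append.mp hpre
    have heq' : E ++ e'.drop E.length = e' := List.prefix_iff_eq_append.mp hpre'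
    have : e <+: e' := by
      rw [← heq, ← heq']
      exact (List.prefix_append_right_inj E).mpr hfg
    have := antichain_of_cutsSet (mem_ref.mp hc').1 e hec' e' hec'' this
    rw [this]

lemma cOf_mem_ref (hc' : c' ∈ ref T (insert E C)) :
    c'.filter (fun e => ¬ E <+: e) ∈ ref T C := by
  rw [mem_ref]
  refine ⟨cutsSet_subset (mem_ref.mp hc').1 (Finset.filter_subset _ _), fun e he => ?_⟩
  obtain ⟨hec', hnpre⟩ := Finset.mem_filter.mp he
  obtain ⟨E₀, hE₀, hpre⟩ := (mem_ref.mp hc').2 e hec'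
  rcases Finset.mem_insert.mp hE₀ with rfl | hE₀'
  · exact absurd hpre hnpre
  · exact ⟨E₀, hE₀', hpre⟩

lemma cOf_cup_dOf (hc' : c' ∈ ref T (insert E C)) :
    c'.filter (fun e => ¬ E <+: e) ∪
      ((c'.filter (fun e => E <+: e)).image (fun e => e.drop E.length)).image (E ++ ·)
      = c' := by
  rw [Finset.image_image]
  have : c'.filter (fun e => E <+: e) =
      (c'.filter (fun e => E <+: e)).image ((E ++ ·) ∘ (fun e => e.drop E.length)) := by
    rw [Finset.image_congr (g := id), Finset.image_id]
    intro e he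
    exact (List.prefix_iff_eq_append.mp (Finset.mem_filter.mp he).2)
  rw [← this, Finset.union_comm, Finset.filter_union_filter_not_eq]

end InsertStep2

end Bonsai

namespace Bonsai

variable {m : ℕ}

section MoreTrunk

variable {T : Bonsai m} {C c d : Finset (List (Fin m))} {E : List (Fin m)}

lemma subtree_trunk_insert (hins : insert E C ∈ T.cutsSet) (hE : E ∉ C)
    {E'' : List (Fin m)} (hE'' : E'' ∈ C) :
    (T.trunk (insert E c)).subtreeAt E'' = (T.trunk c).subtreeAt E'' := by
  apply subtree_trunk_congr
  intro p hp
  constructor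
  · exact fun h e he => h e (Finset.mem_insert_of_mem he)
  · intro h e he
    rcases Finset.mem_insert.mp he with rfl | he'
    · exact mem_C_far hins hE hE'' hp
    · exact h e he'

lemma subtree_trunk_cup (hins : insert E C ∈ T.cutsSet) (hE : E ∉ C)
    {E'' : List (Fin m)} (hE'' : E'' ∈ C) :
    (T.trunk (c ∪ d.image (E ++ ·))).subtreeAt E'' = (T.trunk c).subtreeAt E'' := by
  apply subtree_trunk_congr
  intro p hp
  constructor
  · exact fun h e he => h e (Finset.mem_union_left _ he)
  · intro h e he
    rcases Finset.mem_union.mp he with he' | he'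
    · exact h e he'
    · obtain ⟨f, hf, rfl⟩ := Finset.mem_image.mp he'
      exact fun hpre => mem_C_far hins hE hE'' hp ((List.prefix_append E f).trans hpre)

lemma subtreeAt_trunk_cup (hins : insert E C ∈ T.cutsSet) (hE : E ∉ C)
    (hc : c ∈ ref T C) (hd : d ∈ (T.subtreeAt E).cutsSet) :
    (T.trunk (c ∪ d.image (E ++ ·))).subtreeAt E = (T.subtreeAt E).trunk d := by
  apply ext'
  ext q
  simp only [mem_subtreeAt_verts, mem_trunk_verts]
  constructor
  · rintro (rfl | hnil | ⟨hv, hcond⟩)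
    · exact Or.inl rfl
    · exact Or.inl (List.append_eq_nil_iff.mp hnil).2
    · refine Or.inr ⟨Or.inr hv, fun f hf hpre => ?_⟩
      exact hcond (E ++ f) (Finset.mem_union_right _ (Finset.mem_image_of_mem _ hf))
        ((List.prefix_append_right_inj E).mpr hpre)
  · rintro (rfl | ⟨rfl | hv, hcond⟩)
    · exact Or.inl rfl
    · exact Or.inl rfl
    · refine Or.inr (Or.inr ⟨hv, fun e he hpre => ?_⟩)
      rcases Finset.mem_union.mp he with he' | he'
      · exact ref_far hins hE hc he' (List.prefix_append E q) hpre
      · obtain ⟨f, hf, rfl⟩ := Finset.mem_image.mp he'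
        exact hcond f hf ((List.prefix_append_right_inj E).mp hpre)

end MoreTrunk

end Bonsai


section HopfAlgebra

variable (k : Type) [Field k]

/-- The `m`-bonsai algebra `H_{b,m}`: the free commutative `k`-algebra on the set
of `m`-bonsais, whose monomial basis consists of forests of `m`-bonsais. -/
abbrev BonsaiAlg (k : Type) [Field k] (m : ℕ) := MvPolynomial (Bonsai m) k

/-- The monomial of `H_{b,m}` corresponding to a forest (multiset of bonsais). -/
noncomputable def forestPoly (m : ℕ) (F : Multiset (Bonsai m)) : BonsaiAlg k m :=
  (F.map MvPolynomial.X).prod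

/-- The coproduct of `H_{b,m}`: on a tree generator,
`Δ(T) = T ⊗ 1 + Σ_c P_c(T) ⊗ R_c(T)` (the sum over all simple cuts `c`,
including the empty cut, which contributes `1 ⊗ T`), extended to all of
`H_{b,m}` as an algebra homomorphism (i.e. multiplicatively on forests). -/
noncomputable def Delta (m : ℕ) :
    BonsaiAlg k m →ₐ[k] (BonsaiAlg k m ⊗[k] BonsaiAlg k m) :=
  MvPolynomial.aeval (fun T => MvPolynomial.X T ⊗ₜ[k] 1
    + ∑ c ∈ Bonsai.cutsSet T,
        (forestPoly k m (Bonsai.branches T c)) ⊗ₜ[k] MvPolynomial.X (Bonsai.trunk T c))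

section HopfAlgebraAux

open Bonsai MvPolynomial

variable (k : Type) [Field k] {m : ℕ}

lemma forestPoly_branches (T : Bonsai m) (c : Finset (List (Fin m))) :
    forestPoly k m (T.branches c) = ∏ e ∈ c, MvPolynomial.X (T.subtreeAt e) := by
  rw [forestPoly, Bonsai.branches, Multiset.map_map]
  rfl

lemma Delta_X (T : Bonsai m) :
    Delta k m (MvPolynomial.X T) = MvPolynomial.X T ⊗ₜ[k] 1 +
      ∑ c ∈ T.cutsSet, (∏ e ∈ c, MvPolynomial.X (T.subtreeAt e)) ⊗ₜ[k]
        MvPolynomial.X (T.trunk c) := by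
  rw [Delta, MvPolynomial.aeval_X]
  simp only [forestPoly_branches]

lemma deltaL (T : Bonsai m) {C : Finset (List (Fin m))} (hC : C ∈ T.cutsSet) :
    Delta k m (∏ e ∈ C, MvPolynomial.X (T.subtreeAt e)) =
      ∑ c ∈ ref T C, (∏ e ∈ c, MvPolynomial.X (T.subtreeAt e)) ⊗ₜ[k]
        (∏ E ∈ C \ c, MvPolynomial.X ((T.trunk c).subtreeAt E)) := by
  classical
  revert hC
  induction C using Finset.induction_on with
  | empty =>
      intro _
      rw [Finset.prod_empty, map_one, ref_empty, Finset.sum_singleton]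
      simp [Algebra.TensorProduct.one_def]
  | @insert E C hE ih =>
      intro hins
      have hC : C ∈ T.cutsSet := cutsSet_subset hins (Finset.subset_insert E C)
      rw [Finset.prod_insert hE, map_mul, ih hC, Delta_X k (T.subtreeAt E), add_mul,
        Finset.sum_mul_sum,
        ← Finset.sum_filter_add_sum_filter_not (ref T (insert E C)) (fun c' => E ∈ c')]
      congr 1
      · -- terms where the outer branch at `E` survives whole
        rw [Finset.mul_sum]
        refine Finset.sum_nbij' (fun c => insert E c) (fun c' => c'.erase E)
          (fun c hc => ?_) (fun c' hc' => ?_) (fun c hc => ?_) (fun c' hc' => ?_)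
          (fun c hc => ?_)
        · exact Finset.mem_filter.mpr
            ⟨ref_insert_mem hins hE hc, Finset.mem_insert_self E c⟩
        · exact erase_mem_ref (Finset.mem_filter.mp hc').1 (Finset.mem_filter.mp hc').2
        · exact Finset.erase_insert (ref_not_mem hins hE hc)
        · exact Finset.insert_erase (Finset.mem_filter.mp hc').2
        · rw [Algebra.TensorProduct.tmul_mul_tmul, one_mul,
            Finset.prod_insert (ref_not_mem hins hE hc),
            sdiff_insert_insert hE (ref_not_mem hins hE hc)]
          refine congrArg₂ _ rfl (Finset.prod_congr rfl fun E'' hE'' => ?_)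
          rw [subtree_trunk_insert hins hE (Finset.mem_sdiff.mp hE'').1]
      · -- terms where the outer branch at `E` is cut further
        rw [← Finset.sum_product']
        refine Finset.sum_nbij' (fun x => x.2 ∪ x.1.image (E ++ ·))
          (fun c' => ⟨(c'.filter (fun e => E <+: e)).image (fun e => e.drop E.length),
            c'.filter (fun e => ¬ E <+: e)⟩)
          (fun x hx => ?_) (fun c' hc' => ?_) (fun x hx => ?_) (fun c' hc' => ?_)
          (fun x hx => ?_)
        · obtain ⟨hd, hc⟩ := Finset.mem_product.mp hx
          exact Finset.mem_filter.mpr ⟨cup_mem_ref hins hE hc hd,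
            E_not_mem_cup hins hE hc hd⟩
        · obtain ⟨h1, h2⟩ := Finset.mem_filter.mp hc'
          exact Finset.mem_product.mpr ⟨dOf_mem_cutsSet h1 h2, cOf_mem_ref h1⟩
        · obtain ⟨hd, hc⟩ := Finset.mem_product.mp hx
          refine Prod.ext ?_ ?_
          · rw [filter_cup_below hins hE hc hd, image_drop_image]
          · rw [filter_cup_not_below hins hE hc hd]
        · dsimp only
          exact cOf_cup_dOf (Finset.mem_filter.mp hc').1
        · obtain ⟨hd, hc⟩ := Finset.mem_product.mp hx
          rw [Algebra.TensorProduct.tmul_mul_tmul]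
          have hdisj : Disjoint x.2 (x.1.image (E ++ ·)) := by
            rw [Finset.disjoint_left]
            intro a ha hai
            obtain ⟨f, hf, rfl⟩ := Finset.mem_image.mp hai
            exact (ref_incomp hins hE hc ha).1 (List.prefix_append E f)
          have hinj : ∀ a ∈ x.1, ∀ b ∈ x.1, E ++ a = E ++ b → a = b :=
            fun a _ b _ h => List.append_cancel_left h
          rw [Finset.prod_union hdisj]
          rw [Finset.prod_image hinj]
          rw [sdiff_cup hins hE hc hd]
          have hEnot : E ∉ C \ x.2 := fun h => hE (Finset.mem_sdiff.mp h).1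
          rw [Finset.prod_insert hEnot]
          have h1 : ∀ f ∈ x.1, (MvPolynomial.X (T.subtreeAt (E ++ f)) : BonsaiAlg k m) =
              MvPolynomial.X ((T.subtreeAt E).subtreeAt f) := fun f _ => by
            rw [subtreeAt_append]
          rw [Finset.prod_congr rfl h1, subtreeAt_trunk_cup hins hE hc hd]
          have h2 : ∀ E'' ∈ C \ x.2,
              (MvPolynomial.X ((T.trunk (x.2 ∪ x.1.image (E ++ ·))).subtreeAt E'') :
                BonsaiAlg k m) =
              MvPolynomial.X ((T.trunk x.2).subtreeAt E'') := fun E'' hE'' => by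
            rw [subtree_trunk_cup hins hE (Finset.mem_sdiff.mp hE'').1]
          rw [Finset.prod_congr rfl h2, mul_comm (∏ f ∈ x.1, _)]

end HopfAlgebraAux


set_option maxHeartbeats 2000000

/-- The coproduct `Δ` of the `m`-bonsai algebra `H_{b,m}` is
coassociative: `(Δ ⊗ id) ∘ Δ = (id ⊗ Δ) ∘ Δ` on `H_{b,m}` (the two sides being
compared via the canonical associator of tensor products). -/
theorem Delta_coassoc (m : ℕ) :
    (Algebra.TensorProduct.assoc k k k (BonsaiAlg k m) (BonsaiAlg k m)
          (BonsaiAlg k m)).toAlgHom.comp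
        ((Algebra.TensorProduct.map (Delta k m) (AlgHom.id k (BonsaiAlg k m))).comp
          (Delta k m))
      = (Algebra.TensorProduct.map (AlgHom.id k (BonsaiAlg k m)) (Delta k m)).comp
          (Delta k m) := by
  classical
  apply MvPolynomial.algHom_ext
  intro T
  rw [AlgHom.comp_apply, AlgHom.comp_apply, AlgHom.comp_apply, Delta_X]
  have hmapl : (Algebra.TensorProduct.map (Delta k m) (AlgHom.id k (BonsaiAlg k m)))
      (MvPolynomial.X T ⊗ₜ[k] 1 + ∑ c ∈ T.cutsSet,
        (∏ e ∈ c, MvPolynomial.X (T.subtreeAt e)) ⊗ₜ[k] MvPolynomial.X (T.trunk c))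
      = (MvPolynomial.X T ⊗ₜ[k] (1 : BonsaiAlg k m) + ∑ c ∈ T.cutsSet,
          (∏ e ∈ c, MvPolynomial.X (T.subtreeAt e)) ⊗ₜ[k] MvPolynomial.X (T.trunk c))
            ⊗ₜ[k] (1 : BonsaiAlg k m)
        + ∑ C ∈ T.cutsSet, (∑ c ∈ Bonsai.ref T C,
            (∏ e ∈ c, MvPolynomial.X (T.subtreeAt e)) ⊗ₜ[k]
              (∏ E ∈ C \ c, MvPolynomial.X ((T.trunk c).subtreeAt E)))
            ⊗ₜ[k] MvPolynomial.X (T.trunk C) := by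
    rw [map_add, map_sum]
    simp only [Algebra.TensorProduct.map_tmul, AlgHom.coe_id, id_eq, map_one]
    rw [Delta_X]
    congr 1
    exact Finset.sum_congr rfl fun C hC => by rw [deltaL k T hC]
  rw [hmapl]
  have hassoc : (Algebra.TensorProduct.assoc k k k (BonsaiAlg k m) (BonsaiAlg k m)
        (BonsaiAlg k m)).toAlgHom
      ((MvPolynomial.X T ⊗ₜ[k] (1 : BonsaiAlg k m) + ∑ c ∈ T.cutsSet,
          (∏ e ∈ c, MvPolynomial.X (T.subtreeAt e)) ⊗ₜ[k] MvPolynomial.X (T.trunk c))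
            ⊗ₜ[k] (1 : BonsaiAlg k m)
        + ∑ C ∈ T.cutsSet, (∑ c ∈ Bonsai.ref T C,
            (∏ e ∈ c, MvPolynomial.X (T.subtreeAt e)) ⊗ₜ[k]
              (∏ E ∈ C \ c, MvPolynomial.X ((T.trunk c).subtreeAt E)))
            ⊗ₜ[k] MvPolynomial.X (T.trunk C))
      = (MvPolynomial.X T ⊗ₜ[k] ((1 : BonsaiAlg k m) ⊗ₜ[k] (1 : BonsaiAlg k m))
          + ∑ c ∈ T.cutsSet, (∏ e ∈ c, MvPolynomial.X (T.subtreeAt e)) ⊗ₜ[k]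
              (MvPolynomial.X (T.trunk c) ⊗ₜ[k] (1 : BonsaiAlg k m)))
        + ∑ C ∈ T.cutsSet, ∑ c ∈ Bonsai.ref T C,
            (∏ e ∈ c, MvPolynomial.X (T.subtreeAt e)) ⊗ₜ[k]
              ((∏ E ∈ C \ c, MvPolynomial.X ((T.trunk c).subtreeAt E)) ⊗ₜ[k]
                MvPolynomial.X (T.trunk C)) := by
    simp only [TensorProduct.add_tmul, TensorProduct.sum_tmul, map_add, map_sum,
      AlgEquiv.toAlgHom_eq_coe, AlgHom.coe_coe, AlgEquiv.coe_algHom,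
      Algebra.TensorProduct.assoc_tmul]
  rw [hassoc]
  have hmapr : (Algebra.TensorProduct.map (AlgHom.id k (BonsaiAlg k m)) (Delta k m))
      (MvPolynomial.X T ⊗ₜ[k] 1 + ∑ c ∈ T.cutsSet,
        (∏ e ∈ c, MvPolynomial.X (T.subtreeAt e)) ⊗ₜ[k] MvPolynomial.X (T.trunk c))
      = MvPolynomial.X T ⊗ₜ[k] ((1 : BonsaiAlg k m) ⊗ₜ[k] (1 : BonsaiAlg k m))
        + (∑ c ∈ T.cutsSet, (∏ e ∈ c, MvPolynomial.X (T.subtreeAt e)) ⊗ₜ[k]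
              (MvPolynomial.X (T.trunk c) ⊗ₜ[k] (1 : BonsaiAlg k m))
          + ∑ c ∈ T.cutsSet, ∑ c' ∈ (T.trunk c).cutsSet,
              (∏ e ∈ c, MvPolynomial.X (T.subtreeAt e)) ⊗ₜ[k]
                ((∏ e' ∈ c', MvPolynomial.X ((T.trunk c).subtreeAt e')) ⊗ₜ[k]
                  MvPolynomial.X ((T.trunk c).trunk c'))) := by
    rw [map_add, map_sum]
    simp only [Algebra.TensorProduct.map_tmul, AlgHom.coe_id, id_eq, map_one]
    congr 1
    simp only [Delta_X k, TensorProduct.tmul_add, TensorProduct.tmul_sum]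
    rw [Finset.sum_add_distrib]
  rw [hmapr, add_assoc]
  congr 1
  congr 1
  -- the heart of coassociativity: exchanging the two layers of cuts
  rw [Finset.sum_sigma', Finset.sum_sigma']
  refine Finset.sum_nbij' (fun x => ⟨x.2, x.1 \ x.2⟩)
    (fun y => ⟨Bonsai.cof y.1 y.2, y.1⟩)
    (fun x hx => ?_) (fun y hy => ?_) (fun x hx => ?_) (fun y hy => ?_) (fun x hx => ?_)
  · obtain ⟨h1, h2⟩ := Finset.mem_sigma.mp hx
    exact Finset.mem_sigma.mpr ⟨(Bonsai.mem_ref.mp h2).1,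
      Bonsai.sdiff_mem_cutsSet_trunk h1 h2⟩
  · obtain ⟨h1, h2⟩ := Finset.mem_sigma.mp hy
    exact Finset.mem_sigma.mpr ⟨Bonsai.cof_mem_cutsSet h1 h2, Bonsai.mem_ref_cof h1⟩
  · obtain ⟨h1, h2⟩ := Finset.mem_sigma.mp hx
    dsimp only
    rw [Bonsai.cof_sdiff_self h1 h2]
  · obtain ⟨h1, h2⟩ := Finset.mem_sigma.mp hy
    dsimp only
    rw [Bonsai.cof_sdiff h2]
  · obtain ⟨h1, h2⟩ := Finset.mem_sigma.mp hx
    dsimp only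
    rw [Bonsai.trunk_trunk (Bonsai.mem_ref.mp h2).2]

end HopfAlgebra
end

section
/- Define S : H_{b,m} → H_{b,m} by S(1) = 1, S(T) = −T − Σ_{c ≠ ∅} S(P_c(T))·R_c(T) for every m-bonsai T (the sum over nonempty simple cuts of T, with S applied multiplicatively to the forest P_c(T)), and S(T_1⋯T_n) = S(T_n)⋯S(T_1) on forests. Then μ ∘ (S ⊗ id) ∘ Δ = η ∘ ε, where μ is the multiplication and η the unit of H_{b,m}; hence S is an antipode and H_{b,m} is a Hopf algebra. -/
/-! Core definitions for (edge-labeled) `m`-bonsais, following Byun,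
"A Generalization of Connes-Kreimer Hopf Algebra".

An `m`-bonsai is a finite rooted tree in which every vertex has at most `m`
children and the edges from a vertex to its children carry pairwise distinct
labels from `{1, …, m}` (here modeled by `Fin m`).  We encode such a tree by
its (finite, prefix-closed) set of vertex-addresses: the address of a vertex
is the list of edge labels on the path from the root to it.  This encoding
builds in both the arity bound and the distinctness of sibling labels. -/

open scoped Classical TensorProduct

namespace Bonsai
variable {m : ℕ}

theorem deg_subtreeAt_lt (T : Bonsai m) {e : List (Fin m)}
    (he : e ∈ T.verts) (hne : e ≠ []) : (T.subtreeAt e).deg < T.deg := by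
  have hes : e ∈ T.verts.filter (fun p => e <+: p) :=
    Finset.mem_filter.mpr ⟨he, List.prefix_refl e⟩
  have hnil : ([] : List (Fin m)) ∈
      (T.verts.filter (fun p => e <+: p)).image (fun p => p.drop e.length) := by
    refine Finset.mem_image.mpr ⟨e, hes, by simp⟩
  have hv : (T.subtreeAt e).verts
      = (T.verts.filter (fun p => e <+: p)).image (fun p => p.drop e.length) := by
    simp [Bonsai.subtreeAt, Finset.insert_eq_self.mpr hnil]
  have h1 : (T.subtreeAt e).deg ≤ (T.verts.filter (fun p => e <+: p)).card := by
    show (T.subtreeAt e).verts.card ≤ _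
    rw [hv]
    exact Finset.card_image_le
  have h2 : (T.verts.filter (fun p => e <+: p)).card < T.verts.card := by
    apply Finset.card_lt_card
    constructor
    · exact Finset.filter_subset _ _
    · intro hsub
      have := hsub T.root_mem
      simp only [Finset.mem_filter] at this
      exact hne (List.prefix_nil.mp this.2)
  exact lt_of_le_of_lt h1 h2

end Bonsai

section HopfAlgebra

variable (k : Type) [Field k]

/-- The counit `ε` of `H_{b,m}`: `ε(1) = 1` and `ε` kills every nonempty forest. -/
noncomputable def counit (m : ℕ) : BonsaiAlg k m →ₐ[k] k :=
  MvPolynomial.aeval (fun _ => (0 : k))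

/-- The antipode on tree generators:
`S(T) = -T - Σ_{c ≠ ∅} S(P_c(T)) ⋅ R_c(T)`, the sum over nonempty simple cuts of
`T`, with `S` applied multiplicatively to the forest `P_c(T)`. -/
noncomputable def antipodeTree (m : ℕ) (T : Bonsai m) : BonsaiAlg k m :=
  - MvPolynomial.X T
  - ∑ c ∈ ((Bonsai.cutsSet T).erase ∅).attach,
      ((c.1.attach.val.map (fun e => antipodeTree m (T.subtreeAt e.1))).prod)
        * MvPolynomial.X (Bonsai.trunk T c.1)
termination_by T.deg
decreasing_by
  have hc : c.1 ∈ (Bonsai.cutsSet T).erase ∅ := c.2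
  have hc' : c.1 ⊆ T.verts.erase [] := by
    have h1 := Finset.mem_erase.mp hc
    have h2 := (Finset.mem_filter.mp h1.2).1
    exact Finset.mem_powerset.mp h2
  have he : e.1 ∈ T.verts.erase [] := hc' e.2
  exact Bonsai.deg_subtreeAt_lt T (Finset.mem_of_mem_erase he) (Finset.ne_of_mem_erase he)

/-- The antipode `S` of `H_{b,m}`, extended multiplicatively to forests
(`H_{b,m}` is commutative, so `S(T₁⋯Tₙ) = S(Tₙ)⋯S(T₁)` is the multiplicative
extension, with `S(1) = 1`). -/
noncomputable def antipode (m : ℕ) : BonsaiAlg k m →ₐ[k] BonsaiAlg k m :=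
  MvPolynomial.aeval (antipodeTree k m)


section AuxProof
open Bonsai MvPolynomial

variable {k : Type} [Field k]

lemma empty_mem_cutsSet (m : ℕ) (T : Bonsai m) :
    (∅ : Finset (List (Fin m))) ∈ Bonsai.cutsSet T := by
  simp [Bonsai.cutsSet]

lemma trunk_empty (m : ℕ) (T : Bonsai m) : T.trunk ∅ = T := by
  apply Bonsai.ext'
  simp [Bonsai.trunk, Finset.insert_eq_self.mpr T.root_mem]

lemma antipode_forestPoly (m : ℕ) (F : Multiset (Bonsai m)) :
    antipode k m (forestPoly k m F) = (F.map (antipodeTree k m)).prod := by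
  simp [forestPoly, antipode, map_multiset_prod, Multiset.map_map, Function.comp]

lemma gen_identity (m : ℕ) (T : Bonsai m) :
    antipodeTree k m T + ∑ c ∈ Bonsai.cutsSet T,
      ((Bonsai.branches T c).map (antipodeTree k m)).prod
        * MvPolynomial.X (Bonsai.trunk T c) = 0 := by
  rw [← Finset.add_sum_erase _ _ (empty_mem_cutsSet m T), trunk_empty]
  have hb : Bonsai.branches T (∅ : Finset (List (Fin m))) = 0 := rfl
  have hinner : ∀ c : Finset (List (Fin m)),
      (c.attach.val.map (fun e => antipodeTree k m (T.subtreeAt e.1)))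
      = (Bonsai.branches T c).map (antipodeTree k m) := by
    intro c
    rw [Bonsai.branches, Multiset.map_map]
    exact Multiset.attach_map_val' c.val (fun e => antipodeTree k m (T.subtreeAt e))
  have h2 : ∑ c ∈ ((Bonsai.cutsSet T).erase ∅).attach,
      ((c.1.attach.val.map (fun e => antipodeTree k m (T.subtreeAt e.1))).prod)
        * MvPolynomial.X (Bonsai.trunk T c.1)
      = ∑ c ∈ (Bonsai.cutsSet T).erase ∅,
      ((Bonsai.branches T c).map (antipodeTree k m)).prod
        * MvPolynomial.X (Bonsai.trunk T c) := by
    simp only [hinner]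
    exact Finset.sum_attach ((Bonsai.cutsSet T).erase ∅)
      (fun c => ((Bonsai.branches T c).map (antipodeTree k m)).prod
        * MvPolynomial.X (Bonsai.trunk T c))
  rw [antipodeTree, h2, hb]
  ring_nf
  simp

theorem antipode_convolution_identity' (m : ℕ) :
    ∀ x : BonsaiAlg k m,
      (LinearMap.mul' k (BonsaiAlg k m))
          ((TensorProduct.map (antipode k m).toLinearMap LinearMap.id)
            (Delta k m x))
        = algebraMap k (BonsaiAlg k m) (_root_.counit k m x) := by
  intro x
  have hmaps : (LinearMap.mul' k (BonsaiAlg k m)).comp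
      (TensorProduct.map (antipode k m).toLinearMap LinearMap.id)
      = (Algebra.TensorProduct.productMap (antipode k m)
          (AlgHom.id k (BonsaiAlg k m))).toLinearMap := by
    apply TensorProduct.ext'
    intro a b
    simp [Algebra.TensorProduct.productMap_apply_tmul]
  have hL : (LinearMap.mul' k (BonsaiAlg k m))
          ((TensorProduct.map (antipode k m).toLinearMap LinearMap.id)
            (Delta k m x))
      = ((Algebra.TensorProduct.productMap (antipode k m)
          (AlgHom.id k (BonsaiAlg k m))).comp (Delta k m)) x := by
    have := congrArg (fun f => f (Delta k m x)) hmaps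
    simpa using this
  rw [hL]
  have halg : ((Algebra.TensorProduct.productMap (antipode k m)
          (AlgHom.id k (BonsaiAlg k m))).comp (Delta k m))
      = (Algebra.ofId k (BonsaiAlg k m)).comp (_root_.counit k m) := by
    apply MvPolynomial.algHom_ext
    intro T
    simp only [AlgHom.comp_apply, Delta, MvPolynomial.aeval_X]
    rw [map_add, map_sum]
    simp only [Algebra.TensorProduct.productMap_apply_tmul, map_one, mul_one,
      AlgHom.id_apply]
    have hS : antipode k m (MvPolynomial.X T) = antipodeTree k m T :=
      MvPolynomial.aeval_X _ _
    rw [hS]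
    have hcg : ∑ c ∈ Bonsai.cutsSet T,
        antipode k m (forestPoly k m (Bonsai.branches T c))
          * MvPolynomial.X (Bonsai.trunk T c)
        = ∑ c ∈ Bonsai.cutsSet T,
        ((Bonsai.branches T c).map (antipodeTree k m)).prod
          * MvPolynomial.X (Bonsai.trunk T c) := by
      refine Finset.sum_congr rfl (fun c _ => ?_)
      rw [antipode_forestPoly]
    rw [hcg, gen_identity]
    simp [Algebra.ofId_apply, _root_.counit]
  rw [halg]
  rfl

end AuxProof

/-- `μ ∘ (S ⊗ id) ∘ Δ = η ∘ ε`, where `μ` is the multiplication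
and `η` the unit of `H_{b,m}`; hence `S` is an antipode and `H_{b,m}` is a Hopf
algebra. -/
theorem antipode_convolution_identity (m : ℕ) :
    ∀ x : BonsaiAlg k m,
      (LinearMap.mul' k (BonsaiAlg k m))
          ((TensorProduct.map (antipode k m).toLinearMap LinearMap.id)
            (Delta k m x))
        = algebraMap k (BonsaiAlg k m) (counit k m x) := antipode_convolution_identity' m

end HopfAlgebra
end

section
/- The bracket [Z_{T_1}, Z_{T_2}] := Z_{T_1} * Z_{T_2} − Z_{T_2} * Z_{T_1} satisfies the Jacobi identity [[x,y],z] + [[y,z],x] + [[z,x],y] = 0 for all x, y, z in L, and hence makes the k-vector space L spanned by the Z_T a Lie algebra. -/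
/-! Core definitions for (edge-labeled) `m`-bonsais, following Byun,
"A Generalization of Connes-Kreimer Hopf Algebra".

An `m`-bonsai is a finite rooted tree in which every vertex has at most `m`
children and the edges from a vertex to its children carry pairwise distinct
labels from `{1, …, m}` (here modeled by `Fin m`).  We encode such a tree by
its (finite, prefix-closed) set of vertex-addresses: the address of a vertex
is the list of edge labels on the path from the root to it.  This encoding
builds in both the arity bound and the distinctness of sibling labels. -/

open scoped Classical TensorProduct

theorem prefix_append_cons {α : Type*} (v r q : List α) (l : α) (hq : q <+: v ++ l :: r) :
    q <+: v ∨ ∃ r', r' <+: r ∧ q = v ++ l :: r' := by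
  by_cases h : q.length ≤ v.length
  · exact Or.inl (List.prefix_of_prefix_length_le hq (List.prefix_append v (l :: r)) h)
  · right
    have h1 : v ++ [l] <+: q := by
      apply List.prefix_of_prefix_length_le _ hq
      · simp; omega
      · have h2 : (v ++ [l]) ++ r = v ++ l :: r := by simp
        exact h2 ▸ List.prefix_append (v ++ [l]) r
    obtain ⟨r', rfl⟩ := h1
    refine ⟨r', ?_, by simp⟩
    have h3 : (v ++ [l]) ++ r' <+: (v ++ [l]) ++ r := by simpa using hq
    exact (List.prefix_append_right_inj (v ++ [l])).mp h3

namespace Bonsai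
variable {m : ℕ}

/-- `graft T1 T2 v ℓ`: the `m`-bonsai obtained by joining the root of `T1` to
the vertex `v` of `T2` by one new edge carrying the label `ℓ`. -/
noncomputable def graft (T1 T2 : Bonsai m) (v : List (Fin m)) (l : Fin m) : Bonsai m where
  verts := (T2.verts ∪ v.inits.toFinset) ∪ T1.verts.image (fun q => v ++ l :: q)
  root_mem := by simp [T2.root_mem]
  prefix_closed := by
    intro p q hp hq
    simp only [Finset.mem_union, Finset.mem_image, List.mem_toFinset, List.mem_inits] at hp ⊢
    rcases hp with (hp | hp) | ⟨r, hr, rfl⟩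
    · exact Or.inl (Or.inl (T2.prefix_closed hp hq))
    · exact Or.inl (Or.inr (hq.trans hp))
    · rcases prefix_append_cons v r q l hq with h | ⟨r', hr', rfl⟩
      · exact Or.inl (Or.inr h)
      · exact Or.inr ⟨r', T1.prefix_closed hr hr', rfl⟩

/-- The labels `ℓ` admissible at the vertex `v` of `T`, i.e. those such that `v`
has no child edge labeled `ℓ`. -/
noncomputable def admissible (T : Bonsai m) (v : List (Fin m)) : Finset (Fin m) :=
  Finset.univ.filter (fun l => v ++ [l] ∉ T.verts)

/-- `n(T1, T2; T)`: the number of one-edge simple cuts `c` of `T` whose cut-off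
branch is `T1` and whose remaining trunk is `T2`. -/
noncomputable def nCount (T1 T2 T : Bonsai m) : ℕ :=
  ((T.verts.erase []).filter
    (fun e => T.subtreeAt e = T1 ∧ Bonsai.trunk T {e} = T2)).card

end Bonsai

section FreeModule

variable (k : Type) [Field k] (m : ℕ)

/-- The free `k`-vector space `L` on the set of `m`-bonsais, with basis `{Z_T}`. -/
abbrev BonsaiMod (k : Type) [Field k] (m : ℕ) := Bonsai m →₀ k

/-- The basis vector `Z_T`. -/
noncomputable def zb {m : ℕ} (T : Bonsai m) : BonsaiMod k m := Finsupp.single T 1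

/-- The appending operation on basis vectors:
`Z_{T1} * Z_{T2} = Σ_T n(T1,T2;T) Z_T`, equivalently the sum of all bonsais
obtained by joining the root of `T1` to some vertex of `T2` by one new edge
carrying an admissible label. -/
noncomputable def appB {m : ℕ} (T1 T2 : Bonsai m) : BonsaiMod k m :=
  ∑ v ∈ T2.verts, ∑ l ∈ Bonsai.admissible T2 v,
    Finsupp.single (Bonsai.graft T1 T2 v l) 1

/-- The bilinear extension of the appending operation `*` to `L`. -/
noncomputable def appLin : BonsaiMod k m →ₗ[k] BonsaiMod k m →ₗ[k] BonsaiMod k m :=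
  Finsupp.lsum k (fun T1 => LinearMap.toSpanSingleton k _
    (Finsupp.lsum k (fun T2 => LinearMap.toSpanSingleton k (BonsaiMod k m) (appB k T1 T2))))

end FreeModule

/-- The bracket `[x, y] = x * y − y * x` on `L`. -/
noncomputable def bracketL (k : Type) [Field k] (m : ℕ) (x y : BonsaiMod k m) :
    BonsaiMod k m :=
  appLin k m x y - appLin k m y x

/-! ### Auxiliary development for the Jacobi identity -/

namespace Bonsai

variable {m : ℕ}

lemma mem_admissible {T : Bonsai m} {v : List (Fin m)} {l : Fin m} :
    l ∈ admissible T v ↔ v ++ [l] ∉ T.verts := by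
  simp [admissible]

lemma inits_subset {T : Bonsai m} {v : List (Fin m)} (hv : v ∈ T.verts) :
    v.inits.toFinset ⊆ T.verts := by
  intro q hq
  simp only [List.mem_toFinset, List.mem_inits] at hq
  exact T.prefix_closed hv hq

lemma verts_graft {T1 T2 : Bonsai m} {v : List (Fin m)} {l : Fin m} (hv : v ∈ T2.verts) :
    (graft T1 T2 v l).verts = T2.verts ∪ T1.verts.image (fun q => v ++ l :: q) := by
  show (T2.verts ∪ v.inits.toFinset) ∪ _ = _
  rw [Finset.union_eq_left.mpr (inits_subset hv)]

lemma graft_comm (x y z : Bonsai m) (v w : List (Fin m)) (l l' : Fin m) :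
    graft x (graft y z v l) w l' = graft y (graft x z w l') v l := by
  apply ext'
  show (((z.verts ∪ v.inits.toFinset) ∪ y.verts.image (fun q => v ++ l :: q))
      ∪ w.inits.toFinset) ∪ x.verts.image (fun q => w ++ l' :: q)
    = (((z.verts ∪ w.inits.toFinset) ∪ x.verts.image (fun q => w ++ l' :: q))
      ∪ v.inits.toFinset) ∪ y.verts.image (fun q => v ++ l :: q)
  ac_rfl

lemma graft_assoc (x y z : Bonsai m) (v q : List (Fin m)) (l l'' : Fin m) :
    graft x (graft y z v l) (v ++ l :: q) l'' = graft (graft x y q l'') z v l := by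
  apply ext'
  ext p
  simp only [graft, Finset.mem_union, Finset.mem_image, List.mem_toFinset, List.mem_inits]
  constructor
  · rintro ((((hp | hp) | ⟨r, hr, rfl⟩) | hp) | ⟨r, hr, rfl⟩)
    · tauto
    · tauto
    · exact Or.inr ⟨r, Or.inl (Or.inl hr), rfl⟩
    · rcases prefix_append_cons v q p l hp with h | ⟨r', hr', rfl⟩
      · tauto
      · exact Or.inr ⟨r', Or.inl (Or.inr hr'), rfl⟩
    · refine Or.inr ⟨q ++ l'' :: r, Or.inr ⟨r, hr, rfl⟩, by simp⟩
  · rintro ((hp | hp) | ⟨r, (hr | hr) | ⟨s, hs, rfl⟩, rfl⟩)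
    · tauto
    · tauto
    · exact Or.inl (Or.inl (Or.inr ⟨r, hr, rfl⟩))
    · refine Or.inl (Or.inr ?_)
      have : v ++ l :: r <+: v ++ l :: q := by
        simpa [List.prefix_append_right_inj] using hr
      exact this
    · refine Or.inr ⟨s, hs, by simp⟩

/-- Admissibility at an old vertex of a grafted tree. -/
lemma adm_graft_old {y z : Bonsai m} {v w : List (Fin m)} {l : Fin m}
    (hv : v ∈ z.verts) (hl : v ++ [l] ∉ z.verts) (hw : w ∈ z.verts) :
    admissible (graft y z v l) w
      = (admissible z w).filter (fun l' => ¬ (v = w ∧ l = l')) := by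
  ext l'
  simp only [Finset.mem_filter, mem_admissible, verts_graft hv, Finset.mem_union,
    Finset.mem_image, not_or]
  constructor
  · rintro ⟨h1, h2⟩
    refine ⟨h1, ?_⟩
    rintro ⟨rfl, rfl⟩
    exact h2 ⟨[], y.root_mem, by simp⟩
  · rintro ⟨h1, h2⟩
    refine ⟨h1, ?_⟩
    rintro ⟨q, hq, heq⟩
    have hpre : v ++ [l] <+: w ++ [l'] := ⟨q, by simpa using heq⟩
    rcases Nat.lt_or_ge (v ++ [l]).length (w ++ [l']).length with hlen | hlen
    · have : v ++ [l] <+: w := by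
        apply List.prefix_of_prefix_length_le hpre ⟨[l'], rfl⟩
        simp at hlen ⊢; omega
      exact hl (z.prefix_closed hw this)
    · have heq2 : v ++ [l] = w ++ [l'] :=
        List.IsPrefix.eq_of_length_le hpre (by omega)
      have hvw : v.length = w.length := by
        have := congrArg List.length heq2
        simpa using this
      have := List.append_inj heq2 hvw
      exact h2 ⟨this.1, by simpa using this.2⟩

/-- Admissibility at a new (branch) vertex of a grafted tree. -/
lemma adm_graft_new {y z : Bonsai m} {v q : List (Fin m)} {l : Fin m}
    (hv : v ∈ z.verts) (hl : v ++ [l] ∉ z.verts) :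
    admissible (graft y z v l) (v ++ l :: q) = admissible y q := by
  ext l''
  simp only [mem_admissible, verts_graft hv, Finset.mem_union, Finset.mem_image, not_or]
  have h1 : v ++ l :: q ++ [l''] ∉ z.verts := by
    intro h
    apply hl
    apply z.prefix_closed h
    refine ⟨q ++ [l''], by simp⟩
  constructor
  · rintro ⟨-, h2⟩
    intro hmem
    exact h2 ⟨q ++ [l''], hmem, by simp⟩
  · intro h
    refine ⟨h1, ?_⟩
    rintro ⟨r, hr, heq⟩
    apply h
    have h3 : r = q ++ [l''] := by simpa using heq
    rwa [h3] at hr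

lemma disjoint_graft {y z : Bonsai m} {v : List (Fin m)} {l : Fin m}
    (hl : v ++ [l] ∉ z.verts) :
    Disjoint z.verts (y.verts.image (fun q => v ++ l :: q)) := by
  rw [Finset.disjoint_left]
  intro p hp hq
  simp only [Finset.mem_image] at hq
  obtain ⟨q, -, rfl⟩ := hq
  exact hl (z.prefix_closed hp ⟨q, by simp⟩)

end Bonsai

section Jacobi

open Bonsai

variable {k : Type} [Field k] {m : ℕ}

private lemma sum_sum_comm {α β γ δ M : Type*} [AddCommMonoid M]
    (s : Finset α) (t : α → Finset β) (u : Finset γ) (w : γ → Finset δ)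
    (f : α → β → γ → δ → M) :
    ∑ a ∈ s, ∑ b ∈ t a, ∑ c ∈ u, ∑ d ∈ w c, f a b c d
      = ∑ c ∈ u, ∑ d ∈ w c, ∑ a ∈ s, ∑ b ∈ t a, f a b c d := by
  rw [Finset.sum_sigma' s t, Finset.sum_sigma' u w]
  simp_rw [Finset.sum_sigma' u w, Finset.sum_sigma' s t]
  exact Finset.sum_comm

/-- The "double graft" sum: both `x` and `y` grafted directly onto `z`. -/
noncomputable def S2 (k : Type) [Field k] {m : ℕ} (x y z : Bonsai m) : BonsaiMod k m :=
  ∑ v ∈ z.verts, ∑ l ∈ admissible z v, ∑ w ∈ z.verts, ∑ l' ∈ admissible z w,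
    if v = w ∧ l = l' then 0 else Finsupp.single (graft x (graft y z v l) w l') (1 : k)

lemma S2_comm (x y z : Bonsai m) : S2 k x y z = S2 k y x z := by
  unfold S2
  rw [sum_sum_comm]
  refine Finset.sum_congr rfl fun v hv => Finset.sum_congr rfl fun l hl =>
    Finset.sum_congr rfl fun w hw => Finset.sum_congr rfl fun l' hl' => ?_
  rw [graft_comm]
  congr 1
  · simp only [eq_iff_iff]
    constructor <;> rintro ⟨rfl, rfl⟩ <;> exact ⟨rfl, rfl⟩

lemma step_lemma (x y z : Bonsai m) {v : List (Fin m)} {l : Fin m}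
    (hv : v ∈ z.verts) (hl : l ∈ admissible z v) :
    appB k x (graft y z v l)
      = (∑ q ∈ y.verts, ∑ l'' ∈ admissible y q,
          Finsupp.single (graft (graft x y q l'') z v l) (1 : k))
        + ∑ w ∈ z.verts, ∑ l' ∈ admissible z w,
            (if v = w ∧ l = l' then 0
             else Finsupp.single (graft x (graft y z v l) w l') (1 : k)) := by
  rw [mem_admissible] at hl
  rw [appB, verts_graft hv, Finset.sum_union (disjoint_graft hl), add_comm]
  congr 1
  · -- new vertices
    rw [Finset.sum_image (by intro a _ b _ h; simpa using h)]
    refine Finset.sum_congr rfl fun q hq => ?_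
    rw [adm_graft_new hv hl]
    refine Finset.sum_congr rfl fun l'' _ => ?_
    rw [graft_assoc]
  · -- old vertices
    refine Finset.sum_congr rfl fun w hw => ?_
    rw [adm_graft_old hv hl hw, Finset.sum_filter]
    refine Finset.sum_congr rfl fun l' _ => ?_
    by_cases h : v = w ∧ l = l' <;> simp [h]

lemma claimA (x y z : Bonsai m) :
    ∑ v ∈ z.verts, ∑ l ∈ admissible z v, appB k x (graft y z v l)
      = (∑ q ∈ y.verts, ∑ l'' ∈ admissible y q, appB k (graft x y q l'') z)
        + S2 k x y z := by
  have h1 : ∑ v ∈ z.verts, ∑ l ∈ admissible z v, appB k x (graft y z v l)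
      = ∑ v ∈ z.verts, ∑ l ∈ admissible z v,
          ((∑ q ∈ y.verts, ∑ l'' ∈ admissible y q,
            Finsupp.single (graft (graft x y q l'') z v l) (1 : k))
          + ∑ w ∈ z.verts, ∑ l' ∈ admissible z w,
              (if v = w ∧ l = l' then 0
               else Finsupp.single (graft x (graft y z v l) w l') (1 : k))) :=
    Finset.sum_congr rfl fun v hv => Finset.sum_congr rfl fun l hl =>
      step_lemma (k := k) x y z hv hl
  rw [h1]
  simp only [Finset.sum_add_distrib]
  have h2 : (∑ v ∈ z.verts, ∑ l ∈ admissible z v, ∑ q ∈ y.verts, ∑ l'' ∈ admissible y q,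
        Finsupp.single (graft (graft x y q l'') z v l) (1 : k))
      = ∑ q ∈ y.verts, ∑ l'' ∈ admissible y q, appB k (graft x y q l'') z := by
    rw [sum_sum_comm]
    rfl
  rw [h2]
  rfl

lemma appLin_zb_zb (T1 T2 : Bonsai m) :
    appLin k m (zb k T1) (zb k T2) = appB k T1 T2 := by
  simp [appLin, zb, Finsupp.lsum_single, LinearMap.toSpanSingleton_apply]

lemma appLin_zb_single (T1 T2 : Bonsai m) :
    appLin k m (zb k T1) (Finsupp.single T2 (1 : k)) = appB k T1 T2 :=
  appLin_zb_zb T1 T2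

lemma appLin_single_zb (T1 T2 : Bonsai m) :
    appLin k m (Finsupp.single T1 (1 : k)) (zb k T2) = appB k T1 T2 :=
  appLin_zb_zb T1 T2

/-- The key (pre-Lie) identity on basis vectors: the associator is symmetric
in its first two arguments. -/
lemma key_preLie (x y z : Bonsai m) :
    appLin k m (zb k x) (appLin k m (zb k y) (zb k z))
        - appLin k m (appLin k m (zb k x) (zb k y)) (zb k z)
      = appLin k m (zb k y) (appLin k m (zb k x) (zb k z))
        - appLin k m (appLin k m (zb k y) (zb k x)) (zb k z) := by
  have expand : ∀ a b : Bonsai m,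
      appLin k m (zb k a) (appLin k m (zb k b) (zb k z))
        - appLin k m (appLin k m (zb k a) (zb k b)) (zb k z) = S2 k a b z := by
    intro a b
    rw [appLin_zb_zb a b, appLin_zb_zb b z, appB, appB]
    simp only [map_sum, LinearMap.coe_sum, Finset.sum_apply, LinearMap.sum_apply]
    have e1 : (∑ v ∈ z.verts, ∑ l ∈ admissible z v,
        appLin k m (zb k a) (Finsupp.single (graft b z v l) (1:k)))
      = ∑ v ∈ z.verts, ∑ l ∈ admissible z v, appB k a (graft b z v l) :=
      Finset.sum_congr rfl fun v _ => Finset.sum_congr rfl fun l _ =>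
        appLin_zb_single a _
    have e2 : (∑ q ∈ b.verts, ∑ l'' ∈ admissible b q,
        appLin k m (Finsupp.single (graft a b q l'') (1:k)) (zb k z))
      = ∑ q ∈ b.verts, ∑ l'' ∈ admissible b q, appB k (graft a b q l'') z :=
      Finset.sum_congr rfl fun q _ => Finset.sum_congr rfl fun l'' _ =>
        appLin_single_zb _ z
    rw [e1, e2, claimA a b z]
    abel
  rw [expand x y, expand y x, S2_comm]

lemma bracket_jacobi_basis (a b c : Bonsai m) :
    bracketL k m (bracketL k m (zb k a) (zb k b)) (zb k c)
      + bracketL k m (bracketL k m (zb k b) (zb k c)) (zb k a)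
      + bracketL k m (bracketL k m (zb k c) (zb k a)) (zb k b) = 0 := by
  set F := appLin k m with hF
  set A := zb k a
  set B := zb k b
  set C := zb k c
  have h1 := key_preLie (k := k) a b c
  have h2 := key_preLie (k := k) b c a
  have h3 := key_preLie (k := k) c a b
  simp only [← hF] at h1 h2 h3
  have e1 : F A (F B C) - F (F A B) C - (F B (F A C) - F (F B A) C) = 0 :=
    sub_eq_zero_of_eq h1
  have e2 : F B (F C A) - F (F B C) A - (F C (F B A) - F (F C B) A) = 0 :=
    sub_eq_zero_of_eq h2
  have e3 : F C (F A B) - F (F C A) B - (F A (F C B) - F (F A C) B) = 0 :=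
    sub_eq_zero_of_eq h3
  simp only [bracketL, map_sub, LinearMap.sub_apply]
  calc F (F A B) C - F (F B A) C - (F C (F A B) - F C (F B A))
        + (F (F B C) A - F (F C B) A - (F A (F B C) - F A (F C B)))
        + (F (F C A) B - F (F A C) B - (F B (F C A) - F B (F A C)))
      = -((F A (F B C) - F (F A B) C - (F B (F A C) - F (F B A) C))
          + (F B (F C A) - F (F B C) A - (F C (F B A) - F (F C B) A))
          + (F C (F A B) - F (F C A) B - (F A (F C B) - F (F A C) B))) := by abel
    _ = 0 := by rw [e1, e2, e3]; abel

/-- Bilinearity facts for the bracket. -/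
lemma bracketL_add_left (x x' y : BonsaiMod k m) :
    bracketL k m (x + x') y = bracketL k m x y + bracketL k m x' y := by
  simp only [bracketL, map_add, LinearMap.add_apply]
  abel

lemma bracketL_add_right (x y y' : BonsaiMod k m) :
    bracketL k m x (y + y') = bracketL k m x y + bracketL k m x y' := by
  simp only [bracketL, map_add, LinearMap.add_apply]
  abel

lemma bracketL_smul_left (c : k) (x y : BonsaiMod k m) :
    bracketL k m (c • x) y = c • bracketL k m x y := by
  simp only [bracketL, map_smul, LinearMap.smul_apply, smul_sub]

lemma bracketL_smul_right (c : k) (x y : BonsaiMod k m) :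
    bracketL k m x (c • y) = c • bracketL k m x y := by
  simp only [bracketL, map_smul, LinearMap.smul_apply, smul_sub]

lemma bracketL_zero_left (y : BonsaiMod k m) : bracketL k m 0 y = 0 := by
  simp [bracketL]

lemma bracketL_zero_right (y : BonsaiMod k m) : bracketL k m y 0 = 0 := by
  simp [bracketL]

end Jacobi

/-- The bracket `[Z_{T1}, Z_{T2}] = Z_{T1} * Z_{T2} − Z_{T2} * Z_{T1}`
satisfies the Jacobi identity `[[x,y],z] + [[y,z],x] + [[z,x],y] = 0` for all
`x, y, z ∈ L`, and hence makes the `k`-vector space `L` spanned by the `Z_T` a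
Lie algebra. -/
theorem bracket_jacobi (k : Type) [Field k] (m : ℕ) (x y z : BonsaiMod k m) :
    bracketL k m (bracketL k m x y) z + bracketL k m (bracketL k m y z) x
      + bracketL k m (bracketL k m z x) y = 0 := by
  induction x using Finsupp.induction_linear with
  | zero => simp [bracketL_zero_left, bracketL_zero_right, bracketL_add_left, bracketL_add_right]
  | add f g hf hg =>
    simp only [bracketL_add_left, bracketL_add_right] at *
    calc _ = (bracketL k m (bracketL k m f y) z + bracketL k m (bracketL k m y z) f
          + bracketL k m (bracketL k m z f) y)
        + (bracketL k m (bracketL k m g y) z + bracketL k m (bracketL k m y z) g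
          + bracketL k m (bracketL k m z g) y) := by abel
      _ = 0 := by rw [hf, hg, add_zero]
  | single a c =>
    induction y using Finsupp.induction_linear with
    | zero => simp [bracketL_zero_left, bracketL_zero_right, bracketL_add_left, bracketL_add_right]
    | add f g hf hg =>
      simp only [bracketL_add_left, bracketL_add_right] at *
      calc _ = (bracketL k m (bracketL k m (Finsupp.single a c) f) z
            + bracketL k m (bracketL k m f z) (Finsupp.single a c)
            + bracketL k m (bracketL k m z (Finsupp.single a c)) f)
          + (bracketL k m (bracketL k m (Finsupp.single a c) g) z
            + bracketL k m (bracketL k m g z) (Finsupp.single a c)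
            + bracketL k m (bracketL k m z (Finsupp.single a c)) g) := by abel
        _ = 0 := by rw [hf, hg, add_zero]
    | single b d =>
      induction z using Finsupp.induction_linear with
      | zero => simp [bracketL_zero_left, bracketL_zero_right, bracketL_add_left, bracketL_add_right]
      | add f g hf hg =>
        simp only [bracketL_add_left, bracketL_add_right] at *
        calc _ = (bracketL k m (bracketL k m (Finsupp.single a c) (Finsupp.single b d)) f
              + bracketL k m (bracketL k m (Finsupp.single b d) f) (Finsupp.single a c)
              + bracketL k m (bracketL k m f (Finsupp.single a c)) (Finsupp.single b d))
            + (bracketL k m (bracketL k m (Finsupp.single a c) (Finsupp.single b d)) g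
              + bracketL k m (bracketL k m (Finsupp.single b d) g) (Finsupp.single a c)
              + bracketL k m (bracketL k m g (Finsupp.single a c)) (Finsupp.single b d)) := by
              abel
          _ = 0 := by rw [hf, hg, add_zero]
      | single e f =>
        have hA : (Finsupp.single a c : BonsaiMod k m) = c • zb k a := by
          simp [zb, Finsupp.smul_single]
        have hB : (Finsupp.single b d : BonsaiMod k m) = d • zb k b := by
          simp [zb, Finsupp.smul_single]
        have hC : (Finsupp.single e f : BonsaiMod k m) = f • zb k e := by
          simp [zb, Finsupp.smul_single]
        rw [hA, hB, hC]
        simp only [bracketL_smul_left, bracketL_smul_right, smul_smul,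
          mul_comm, mul_left_comm, mul_assoc]
        rw [← smul_add, ← smul_add, bracket_jacobi_basis a b e, smul_zero]
end

section
/- For all m-bonsais T_1 and T_2, the first deviation T_1 *_1 T_2 equals the sum of: (a) all m-bonsais obtained by joining the root of T_1 to a tip v of T_2 by one new edge and attaching one further new edge to v, taken over all admissible choices of the two labels; and (b) all m-bonsais obtained by joining the root of T_1 to a non-tip vertex of T_2 by a ladder of two new edges (a path of length two with T_1 hanging at its far end), taken over all admissible choices of the two labels. -/
/-! Core definitions for (edge-labeled) `m`-bonsais, following Byun,
"A Generalization of Connes-Kreimer Hopf Algebra".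

An `m`-bonsai is a finite rooted tree in which every vertex has at most `m`
children and the edges from a vertex to its children carry pairwise distinct
labels from `{1, …, m}` (here modeled by `Fin m`).  We encode such a tree by
its (finite, prefix-closed) set of vertex-addresses: the address of a vertex
is the list of edge labels on the path from the root to it.  This encoding
builds in both the arity bound and the distinctness of sibling labels. -/

open scoped Classical TensorProduct

namespace Bonsai
variable {m : ℕ}

/-- The non-tip vertices of `T`: a vertex is a tip iff it has no children
(equivalently, iff it is a non-root vertex incident to exactly one edge, or `T`
is the one-vertex bonsai). -/
noncomputable def nonTips (T : Bonsai m) : Finset (List (Fin m)) :=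
  T.verts.filter (fun v => ∃ l : Fin m, v ++ [l] ∈ T.verts)

/-- The tips of `T`. -/
noncomputable def tips (T : Bonsai m) : Finset (List (Fin m)) :=
  T.verts.filter (fun v => ¬ ∃ l : Fin m, v ++ [l] ∈ T.verts)

/-- Attaching one new pendant edge with label `l` at the vertex `v` of `T`. -/
noncomputable def attachEdge (T : Bonsai m) (v : List (Fin m)) (l : Fin m) : Bonsai m :=
  Bonsai.graft (Bonsai.point m) T v l

end Bonsai

section CharTwo

variable (k : Type) [Field k] (m : ℕ)

/-- The vertex-appending differential mod 2:
`∂T = Σ T'`, summed over all `m`-bonsais `T'` obtained from `T` by attaching one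
new edge, with an admissible label, to a vertex of `T` that is not a tip. -/
noncomputable def del2Val (T : Bonsai m) : BonsaiMod k m :=
  ∑ v ∈ Bonsai.nonTips T, ∑ l ∈ Bonsai.admissible T v,
    Finsupp.single (Bonsai.attachEdge T v l) 1

/-- The mod-2 vertex-appending differential, extended linearly. -/
noncomputable def del2Map : BonsaiMod k m →ₗ[k] BonsaiMod k m :=
  Finsupp.lsum k (fun T => LinearMap.toSpanSingleton k (BonsaiMod k m) (del2Val k m T))

/-- The first deviation of the appending operation `*`:
`T1 *₁ T2 = ∂(T1 * T2) + (∂T1) * T2 + T1 * (∂T2)` (coefficients mod 2). -/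
noncomputable def dev1 (T1 T2 : Bonsai m) : BonsaiMod k m :=
  del2Map k m (appB k T1 T2)
    + appLin k m (del2Val k m T1) (zb k T2)
    + appLin k m (zb k T1) (del2Val k m T2)

end CharTwo

section Aux

open Bonsai

variable {m : ℕ}

lemma mem_admissible' {T : Bonsai m} {v : List (Fin m)} {l : Fin m} :
    l ∈ admissible T v ↔ v ++ [l] ∉ T.verts := by
  simp [admissible]

lemma new_not_mem {T2 : Bonsai m} {v : List (Fin m)} {l : Fin m}
    (hl : l ∈ admissible T2 v) (u : List (Fin m)) : v ++ l :: u ∉ T2.verts := by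
  intro h
  exact mem_admissible'.mp hl (T2.prefix_closed h ⟨u, by simp⟩)

lemma mem_graft_verts {T1 T2 : Bonsai m} {v : List (Fin m)} {l : Fin m}
    (hv : v ∈ T2.verts) {p : List (Fin m)} :
    p ∈ (graft T1 T2 v l).verts ↔ p ∈ T2.verts ∨ ∃ u ∈ T1.verts, p = v ++ l :: u := by
  simp only [graft, Finset.mem_union, Finset.mem_image, List.mem_toFinset, List.mem_inits]
  constructor
  · rintro ((h | h) | ⟨u, hu, rfl⟩)
    · exact Or.inl h
    · exact Or.inl (T2.prefix_closed hv h)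
    · exact Or.inr ⟨u, hu, rfl⟩
  · rintro (h | ⟨u, hu, rfl⟩)
    · exact Or.inl (Or.inl h)
    · exact Or.inr ⟨u, hu, rfl⟩

lemma eq_new_iff {T1 T2 : Bonsai m} {v w : List (Fin m)} {l : Fin m}
    (hl : l ∈ admissible T2 v) (hw : w ∈ T2.verts) (a : Fin m) :
    (∃ u ∈ T1.verts, w ++ [a] = v ++ l :: u) ↔ (w = v ∧ a = l) := by
  constructor
  · rintro ⟨u, hu, he⟩
    have hvl : v ++ [l] <+: w ++ [a] := he ▸ ⟨u, by simp⟩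
    cases u with
    | nil =>
      obtain ⟨h1, h2⟩ := List.append_inj' he rfl
      exact ⟨h1, by simpa using h2⟩
    | cons b u' =>
      exfalso
      have hlen := congrArg List.length he
      have hpre : v ++ [l] <+: w := by
        refine List.prefix_of_prefix_length_le hvl ⟨[a], rfl⟩ ?_
        simp only [List.length_append, List.length_cons, List.length_nil] at hlen ⊢
        omega
      exact mem_admissible'.mp hl (T2.prefix_closed hw hpre)
  · rintro ⟨rfl, rfl⟩
    exact ⟨[], T1.root_mem, by simp⟩

lemma adm_graft_base {T1 T2 : Bonsai m} {v w : List (Fin m)} {l : Fin m}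
    (hv : v ∈ T2.verts) (hl : l ∈ admissible T2 v) (hw : w ∈ T2.verts) :
    admissible (graft T1 T2 v l) w
      = (admissible T2 w).filter (fun a => ¬ (w = v ∧ a = l)) := by
  ext a
  simp only [Finset.mem_filter, mem_admissible', mem_graft_verts hv,
    eq_new_iff (T1 := T1) hl hw a]
  tauto

lemma adm_graft_new {T1 T2 : Bonsai m} {v u : List (Fin m)} {l : Fin m}
    (hv : v ∈ T2.verts) (hl : l ∈ admissible T2 v) (hu : u ∈ T1.verts) :
    admissible (graft T1 T2 v l) (v ++ l :: u) = admissible T1 u := by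
  ext a
  simp only [mem_admissible']
  have h1 : (v ++ l :: u) ++ [a] = v ++ l :: (u ++ [a]) := by simp
  rw [h1, mem_graft_verts hv]
  constructor
  · intro h hmem
    exact h (Or.inr ⟨u ++ [a], hmem, rfl⟩)
  · rintro h (hmem | ⟨u', hu', he⟩)
    · exact new_not_mem hl _ hmem
    · obtain rfl : u ++ [a] = u' := by simpa using he
      exact h hu'

lemma graft_verts_eq {T1 T2 : Bonsai m} {v : List (Fin m)} {l : Fin m}
    (hv : v ∈ T2.verts) :
    (graft T1 T2 v l).verts = T2.verts ∪ T1.verts.image (fun q => v ++ l :: q) := by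
  ext p
  rw [mem_graft_verts hv]
  simp only [Finset.mem_union, Finset.mem_image]
  constructor
  · rintro (h | ⟨u, hu, rfl⟩)
    exacts [Or.inl h, Or.inr ⟨u, hu, rfl⟩]
  · rintro (h | ⟨u, hu, rfl⟩)
    exacts [Or.inl h, Or.inr ⟨u, hu, rfl⟩]

lemma attach_verts {T2 : Bonsai m} {w : List (Fin m)} {l' : Fin m}
    (hw : w ∈ T2.verts) :
    (attachEdge T2 w l').verts = insert (w ++ [l']) T2.verts := by
  ext p
  rw [attachEdge, mem_graft_verts hw]
  simp only [point, Finset.mem_singleton, Finset.mem_insert]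
  constructor
  · rintro (h | ⟨u, rfl, rfl⟩)
    · exact Or.inr h
    · exact Or.inl (by simp)
  · rintro (rfl | h)
    · exact Or.inr ⟨[], rfl, by simp⟩
    · exact Or.inl h

/-- key tree identity E2 -/
lemma E2 {T1 T2 : Bonsai m} {v w : List (Fin m)} {l l' : Fin m}
    (hv : v ∈ T2.verts) (hw : w ∈ T2.verts) :
    attachEdge (graft T1 T2 v l) w l' = graft T1 (attachEdge T2 w l') v l := by
  apply Bonsai.ext'
  have hw' : w ∈ (graft T1 T2 v l).verts := (mem_graft_verts hv).mpr (Or.inl hw)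
  have hv' : v ∈ (attachEdge T2 w l').verts := by
    rw [attach_verts hw]; exact Finset.mem_insert_of_mem hv
  rw [attach_verts hw', graft_verts_eq hv, graft_verts_eq hv', attach_verts hw]
  ext p
  simp only [Finset.mem_insert, Finset.mem_union, Finset.mem_image]
  tauto

/-- key tree identity E1 -/
lemma E1 {T1 T2 : Bonsai m} {v u : List (Fin m)} {l l' : Fin m}
    (hv : v ∈ T2.verts) (hu : u ∈ T1.verts) :
    attachEdge (graft T1 T2 v l) (v ++ l :: u) l'
      = graft (attachEdge T1 u l') T2 v l := by
  apply Bonsai.ext'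
  have hnew : v ++ l :: u ∈ (graft T1 T2 v l).verts :=
    (mem_graft_verts hv).mpr (Or.inr ⟨u, hu, rfl⟩)
  rw [attach_verts hnew, graft_verts_eq hv, graft_verts_eq hv, attach_verts hu]
  ext p
  simp only [Finset.mem_insert, Finset.mem_union, Finset.mem_image]
  constructor
  · rintro (rfl | h | ⟨q, hq, rfl⟩)
    · exact Or.inr ⟨u ++ [l'], Or.inl rfl, by simp⟩
    · exact Or.inl h
    · exact Or.inr ⟨q, Or.inr hq, rfl⟩
  · rintro (h | ⟨q, (rfl | hq), rfl⟩)
    · exact Or.inr (Or.inl h)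
    · exact Or.inl (by simp)
    · exact Or.inr (Or.inr ⟨q, hq, rfl⟩)

lemma nonTips_subset_verts (T : Bonsai m) : T.nonTips ⊆ T.verts :=
  Finset.filter_subset _ _

lemma nonTips_graft {T1 T2 : Bonsai m} {v : List (Fin m)} {l : Fin m}
    (hv : v ∈ T2.verts) (hl : l ∈ admissible T2 v) :
    (graft T1 T2 v l).nonTips
      = insert v T2.nonTips ∪ T1.nonTips.image (fun u => v ++ l :: u) := by
  ext p
  simp only [nonTips, Finset.mem_filter, Finset.mem_union, Finset.mem_insert,
    Finset.mem_image]
  constructor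
  · rintro ⟨hp, a, ha⟩
    rw [mem_graft_verts hv] at hp
    rcases hp with hp | ⟨u, hu, rfl⟩
    · by_cases hpv : p = v
      · exact Or.inl (Or.inl hpv)
      · left; right
        refine ⟨hp, ?_⟩
        rw [mem_graft_verts hv] at ha
        rcases ha with ha | ha
        · exact ⟨a, ha⟩
        · exact absurd ((eq_new_iff (T1 := T1) hl hp a).mp ha).1 hpv
    · right
      refine ⟨u, ⟨hu, ?_⟩, rfl⟩
      have h1 : (v ++ l :: u) ++ [a] = v ++ l :: (u ++ [a]) := by simp
      rw [h1, mem_graft_verts hv] at ha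
      rcases ha with ha | ⟨u', hu', he⟩
      · exact absurd ha (new_not_mem hl _)
      · obtain rfl : u ++ [a] = u' := by simpa using he
        exact ⟨a, hu'⟩
  · rintro ((he | ⟨hp, a, ha⟩) | ⟨u, ⟨hu, a, ha⟩, he⟩)
    · subst he
      exact ⟨(mem_graft_verts hv).mpr (Or.inl hv),
        l, (mem_graft_verts hv).mpr (Or.inr ⟨[], T1.root_mem, by simp⟩)⟩
    · exact ⟨(mem_graft_verts hv).mpr (Or.inl hp), a,
        (mem_graft_verts hv).mpr (Or.inl ha)⟩
    · subst he
      refine ⟨(mem_graft_verts hv).mpr (Or.inr ⟨u, hu, rfl⟩), a, ?_⟩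
      exact (mem_graft_verts hv).mpr (Or.inr ⟨u ++ [a], ha, by simp⟩)

lemma nonTips_graft_disj {T1 T2 : Bonsai m} {v : List (Fin m)} {l : Fin m}
    (hv : v ∈ T2.verts) (hl : l ∈ admissible T2 v) :
    Disjoint (insert v T2.nonTips) (T1.nonTips.image (fun u => v ++ l :: u)) := by
  rw [Finset.disjoint_left]
  rintro p hp hq
  simp only [Finset.mem_image] at hq
  obtain ⟨u, _, rfl⟩ := hq
  rcases Finset.mem_insert.mp hp with h | h
  · exact new_not_mem hl u (by rw [h]; exact hv)
  · exact new_not_mem hl u (nonTips_subset_verts _ h)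

lemma adm_point (u : List (Fin m)) (hu : u ∈ (Bonsai.point m).verts) :
    admissible (Bonsai.point m) u = Finset.univ := by
  simp only [point, Finset.mem_singleton] at hu
  subst hu
  ext a
  simp [mem_admissible', point]

lemma adm_attach_new {T2 : Bonsai m} {w : List (Fin m)} {l' : Fin m}
    (hw : w ∈ T2.verts) (hl' : l' ∈ admissible T2 w) :
    admissible (attachEdge T2 w l') (w ++ [l']) = Finset.univ := by
  have h : w ++ [l'] = w ++ l' :: ([] : List (Fin m)) := by simp
  rw [attachEdge, h, adm_graft_new hw hl' (Bonsai.point m).root_mem]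
  exact adm_point [] (Bonsai.point m).root_mem

end Aux
section Aux2

open Bonsai Finset

variable {m : ℕ} (k : Type) [Field k]

lemma sum_block_comm {α β γ δ M : Type*} [AddCommMonoid M]
    (s : Finset α) (t : Finset β) (f : α → Finset γ) (g : β → Finset δ)
    (F : α → γ → β → δ → M) :
    ∑ a ∈ s, ∑ c ∈ f a, ∑ b ∈ t, ∑ d ∈ g b, F a c b d
      = ∑ b ∈ t, ∑ d ∈ g b, ∑ a ∈ s, ∑ c ∈ f a, F a c b d := by
  have h1 : (∑ a ∈ s, ∑ c ∈ f a, ∑ b ∈ t, ∑ d ∈ g b, F a c b d)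
      = ∑ p ∈ s.sigma f, ∑ q ∈ t.sigma g, F p.1 p.2 q.1 q.2 := by
    rw [Finset.sum_sigma]
    exact Finset.sum_congr rfl fun a _ => Finset.sum_congr rfl fun c _ =>
      (Finset.sum_sigma t g (fun q => F a c q.1 q.2)).symm
  have h2 : (∑ b ∈ t, ∑ d ∈ g b, ∑ a ∈ s, ∑ c ∈ f a, F a c b d)
      = ∑ q ∈ t.sigma g, ∑ p ∈ s.sigma f, F p.1 p.2 q.1 q.2 := by
    rw [Finset.sum_sigma]
    exact Finset.sum_congr rfl fun b _ => Finset.sum_congr rfl fun d _ =>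
      (Finset.sum_sigma s f (fun p => F p.1 p.2 b d)).symm
  rw [h1, h2, Finset.sum_comm]

lemma del2Map_single (T : Bonsai m) :
    del2Map k m (Finsupp.single T (1 : k)) = del2Val k m T := by
  simp [del2Map, Finsupp.lsum_single, LinearMap.toSpanSingleton_apply]

lemma appLin_single_single (T1 T2 : Bonsai m) :
    appLin k m (Finsupp.single T1 (1 : k)) (Finsupp.single T2 (1 : k))
      = appB k T1 T2 := by
  simp [appLin, Finsupp.lsum_single, LinearMap.toSpanSingleton_apply]

lemma dev1_expand (T1 T2 : Bonsai m) :
    dev1 k m T1 T2 =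
      (∑ v ∈ T2.verts, ∑ l ∈ admissible T2 v, del2Val k m (graft T1 T2 v l))
      + (∑ u ∈ T1.nonTips, ∑ l' ∈ admissible T1 u,
          appB k (attachEdge T1 u l') T2)
      + (∑ w ∈ T2.nonTips, ∑ l' ∈ admissible T2 w,
          appB k T1 (attachEdge T2 w l')) := by
  rw [dev1]
  congr 1
  · congr 1
    · rw [appB, map_sum]
      refine Finset.sum_congr rfl fun v _ => ?_
      rw [map_sum]
      exact Finset.sum_congr rfl fun l _ => del2Map_single k _
    · rw [del2Val, map_sum, LinearMap.sum_apply]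
      refine Finset.sum_congr rfl fun u _ => ?_
      rw [map_sum, LinearMap.sum_apply]
      exact Finset.sum_congr rfl fun l' _ => appLin_single_single k _ _
  · rw [del2Val, map_sum]
    refine Finset.sum_congr rfl fun w _ => ?_
    rw [map_sum]
    exact Finset.sum_congr rfl fun l' _ => appLin_single_single k _ _

variable {T1 T2 : Bonsai m}

lemma helper1 {v w : List (Fin m)} {l : Fin m}
    (hv : v ∈ T2.verts) (hl : l ∈ admissible T2 v) (hw : w ∈ T2.verts) :
    (∑ l' ∈ admissible (graft T1 T2 v l) w,
        Finsupp.single (attachEdge (graft T1 T2 v l) w l') (1 : k))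
      = ∑ l' ∈ admissible T2 w,
          (if w = v ∧ l' = l then 0
            else Finsupp.single (graft T1 (attachEdge T2 w l') v l) (1 : k)) := by
  rw [adm_graft_base hv hl hw, Finset.sum_filter]
  refine Finset.sum_congr rfl fun l' _ => ?_
  rw [E2 hv hw, ite_not]

lemma helper2 {v : List (Fin m)} {l : Fin m}
    (hv : v ∈ T2.verts) (hl : l ∈ admissible T2 v) :
    (∑ l' ∈ admissible (graft T1 T2 v l) v,
        Finsupp.single (attachEdge (graft T1 T2 v l) v l') (1 : k))
      = ∑ l' ∈ (admissible T2 v).erase l,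
          Finsupp.single (attachEdge (graft T1 T2 v l) v l') (1 : k) := by
  rw [adm_graft_base hv hl hv]
  congr 1
  ext a
  simp only [Finset.mem_filter, Finset.mem_erase, true_and, not_and]
  tauto

lemma helper3 {w x : List (Fin m)} {l' : Fin m}
    (hw : w ∈ T2.verts) (hl' : l' ∈ admissible T2 w) (hx : x ∈ T2.verts) :
    (∑ lx ∈ admissible (attachEdge T2 w l') x,
        Finsupp.single (graft T1 (attachEdge T2 w l') x lx) (1 : k))
      = ∑ lx ∈ admissible T2 x,
          (if x = w ∧ lx = l' then 0
            else Finsupp.single (graft T1 (attachEdge T2 w l') x lx) (1 : k)) := by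
  simp only [Bonsai.attachEdge]
  rw [adm_graft_base hw hl' hx, Finset.sum_filter]
  refine Finset.sum_congr rfl fun lx _ => ?_
  rw [ite_not]

end Aux2
set_option maxHeartbeats 2000000

/-- **STATEMENT 12.** Over a field of characteristic 2, for all `m`-bonsais
`T1`, `T2`, the first deviation `T1 *₁ T2` equals the sum of:
(a) all `m`-bonsais obtained by joining the root of `T1` to a tip `v` of `T2`
by one new edge and attaching one further new edge to `v`, over all admissible
choices of the two labels; and
(b) all `m`-bonsais obtained by joining the root of `T1` to a non-tip vertex of
`T2` by a ladder of two new edges, over all admissible choices of the two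
labels. -/
theorem dev1_description (k : Type) [Field k] [CharP k 2] (m : ℕ)
    (T1 T2 : Bonsai m) :
    dev1 k m T1 T2
      = (∑ v ∈ Bonsai.tips T2, ∑ l1 ∈ Bonsai.admissible T2 v,
          ∑ l2 ∈ (Bonsai.admissible T2 v).erase l1,
            Finsupp.single
              (Bonsai.attachEdge (Bonsai.graft T1 T2 v l1) v l2) (1 : k))
        + (∑ v ∈ Bonsai.nonTips T2, ∑ l1 ∈ Bonsai.admissible T2 v,
            ∑ l2 : Fin m,
              Finsupp.single
                (Bonsai.graft T1 (Bonsai.attachEdge T2 v l1) (v ++ [l1]) l2)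
                (1 : k)) := by
  classical
  have h2 : ∀ x : BonsaiMod k m, x + x = 0 := by
    intro x
    have h11 : (1 : k) + 1 = 0 := by
      rw [one_add_one_eq_two]
      exact CharP.cast_eq_zero k 2
    calc x + x = ((1 : k) + (1 : k)) • x := by rw [add_smul, one_smul]
      _ = 0 := by rw [h11, zero_smul]
  set X := (∑ v ∈ Bonsai.tips T2, ∑ l1 ∈ Bonsai.admissible T2 v,
      ∑ l2 ∈ (Bonsai.admissible T2 v).erase l1,
        Finsupp.single (Bonsai.attachEdge (Bonsai.graft T1 T2 v l1) v l2) (1 : k)) with hX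
  set Y := (∑ v ∈ Bonsai.nonTips T2, ∑ l1 ∈ Bonsai.admissible T2 v,
      ∑ l2 : Fin m,
        Finsupp.single
          (Bonsai.graft T1 (Bonsai.attachEdge T2 v l1) (v ++ [l1]) l2) (1 : k)) with hY
  set Dsum := (∑ v ∈ T2.verts, ∑ l ∈ Bonsai.admissible T2 v,
      ∑ w ∈ Bonsai.nonTips T2, ∑ l' ∈ Bonsai.admissible T2 w,
        (if w = v ∧ l' = l then 0
          else Finsupp.single
            (Bonsai.graft T1 (Bonsai.attachEdge T2 w l') v l) (1 : k))) with hD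
  set Bsum := (∑ u ∈ Bonsai.nonTips T1, ∑ l' ∈ Bonsai.admissible T1 u,
      ∑ v ∈ T2.verts, ∑ l ∈ Bonsai.admissible T2 v,
        Finsupp.single
          (Bonsai.graft (Bonsai.attachEdge T1 u l') T2 v l) (1 : k)) with hB
  -- Part A : the differential of the product
  have hptwise : ∀ v ∈ T2.verts, ∀ l ∈ Bonsai.admissible T2 v,
      del2Val k m (Bonsai.graft T1 T2 v l) =
        ((if v ∈ Bonsai.nonTips T2 then 0
            else ∑ l' ∈ (Bonsai.admissible T2 v).erase l,
              Finsupp.single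
                (Bonsai.attachEdge (Bonsai.graft T1 T2 v l) v l') (1 : k))
          + ∑ w ∈ Bonsai.nonTips T2, ∑ l' ∈ Bonsai.admissible T2 w,
              (if w = v ∧ l' = l then 0
                else Finsupp.single
                  (Bonsai.graft T1 (Bonsai.attachEdge T2 w l') v l) (1 : k)))
        + ∑ u ∈ Bonsai.nonTips T1, ∑ l' ∈ Bonsai.admissible T1 u,
            Finsupp.single
              (Bonsai.graft (Bonsai.attachEdge T1 u l') T2 v l) (1 : k) := by
    intro v hv l hl
    simp only [del2Val]
    rw [nonTips_graft hv hl, Finset.sum_union (nonTips_graft_disj hv hl)]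
    congr 1
    · by_cases hvn : v ∈ Bonsai.nonTips T2
      · rw [Finset.insert_eq_self.mpr hvn, if_pos hvn, zero_add]
        exact Finset.sum_congr rfl fun w hw =>
          helper1 k hv hl (nonTips_subset_verts T2 hw)
      · rw [Finset.sum_insert hvn, if_neg hvn]
        congr 1
        · exact helper2 k hv hl
        · exact Finset.sum_congr rfl fun w hw =>
            helper1 k hv hl (nonTips_subset_verts T2 hw)
    · rw [Finset.sum_image (by intro x _ y _ h; simpa using h)]
      refine Finset.sum_congr rfl fun u hu => ?_
      rw [adm_graft_new hv hl (nonTips_subset_verts T1 hu)]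
      refine Finset.sum_congr rfl fun l' _ => ?_
      rw [E1 hv (nonTips_subset_verts T1 hu)]
  have hA : (∑ v ∈ T2.verts, ∑ l ∈ Bonsai.admissible T2 v,
      del2Val k m (Bonsai.graft T1 T2 v l)) = (X + Dsum) + Bsum := by
    rw [Finset.sum_congr rfl fun v hv =>
      Finset.sum_congr rfl fun l hl => hptwise v hv l hl]
    simp only [Finset.sum_add_distrib]
    congr 1
    · congr 1
      · -- the tips part is X
        rw [hX, Bonsai.tips, Finset.sum_filter]
        refine Finset.sum_congr rfl fun v hv => ?_
        by_cases hp : ∃ l0 : Fin m, v ++ [l0] ∈ T2.verts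
        · have hvn : v ∈ Bonsai.nonTips T2 := by
            simp only [Bonsai.nonTips, Finset.mem_filter]; exact ⟨hv, hp⟩
          rw [if_neg (by simpa using hp)]
          simp [hvn]
        · have hvn : v ∉ Bonsai.nonTips T2 := by
            simp only [Bonsai.nonTips, Finset.mem_filter]; tauto
          rw [if_pos (by simpa using hp)]
          simp [hvn]
    · rw [hB]
      exact sum_block_comm T2.verts T1.nonTips
        (fun v => Bonsai.admissible T2 v) (fun u => Bonsai.admissible T1 u)
        (fun v l u l' =>
          Finsupp.single (Bonsai.graft (Bonsai.attachEdge T1 u l') T2 v l) (1 : k))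
  -- Part C
  have hCpt : ∀ w ∈ Bonsai.nonTips T2, ∀ l' ∈ Bonsai.admissible T2 w,
      appB k T1 (Bonsai.attachEdge T2 w l') =
        (∑ l2 : Fin m,
          Finsupp.single
            (Bonsai.graft T1 (Bonsai.attachEdge T2 w l') (w ++ [l']) l2) (1 : k))
        + ∑ x ∈ T2.verts, ∑ lx ∈ Bonsai.admissible T2 x,
            (if x = w ∧ lx = l' then 0
              else Finsupp.single
                (Bonsai.graft T1 (Bonsai.attachEdge T2 w l') x lx) (1 : k)) := by
    intro w hw l' hl'
    have hw' : w ∈ T2.verts := nonTips_subset_verts T2 hw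
    have hnm : w ++ [l'] ∉ T2.verts := mem_admissible'.mp hl'
    simp only [appB]
    rw [attach_verts hw', Finset.sum_insert hnm]
    congr 1
    · rw [adm_attach_new hw' hl']
    · exact Finset.sum_congr rfl fun x hx => helper3 k hw' hl' hx
  have hC : (∑ w ∈ Bonsai.nonTips T2, ∑ l' ∈ Bonsai.admissible T2 w,
      appB k T1 (Bonsai.attachEdge T2 w l')) = Y + Dsum := by
    rw [Finset.sum_congr rfl fun w hw =>
      Finset.sum_congr rfl fun l' hl' => hCpt w hw l' hl']
    simp only [Finset.sum_add_distrib]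
    congr 1
    rw [hD]
    rw [sum_block_comm (Bonsai.nonTips T2) T2.verts
      (fun w => Bonsai.admissible T2 w) (fun v => Bonsai.admissible T2 v)
      (fun w l' x lx =>
        if x = w ∧ lx = l' then 0
        else Finsupp.single
          (Bonsai.graft T1 (Bonsai.attachEdge T2 w l') x lx) (1 : k))]
    refine Finset.sum_congr rfl fun v _ => Finset.sum_congr rfl fun l _ =>
      Finset.sum_congr rfl fun w _ => Finset.sum_congr rfl fun l' _ => ?_
    exact if_congr (and_congr eq_comm eq_comm) rfl rfl
  have hBmid : (∑ u ∈ Bonsai.nonTips T1, ∑ l' ∈ Bonsai.admissible T1 u,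
      appB k (Bonsai.attachEdge T1 u l') T2) = Bsum := rfl
  rw [dev1_expand k T1 T2, hA, hC, hBmid]
  have : ((X + Dsum) + Bsum) + Bsum + (Y + Dsum)
      = (X + Y) + ((Dsum + Dsum) + (Bsum + Bsum)) := by abel
  rw [this, h2 Dsum, h2 Bsum, add_zero, add_zero]
end
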